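/- arXiv:2402.09131 — 6 statements merged into one kernel-verified Lean document; each statement's English description precedes it below -/
import Mathlib

section
/- Let A, B, C, D be points in ℝ² with dist(A,B) = dist(B,C) = dist(C,D) = 1 and dist(A,D) ≥ 1, and suppose that A and D lie strictly on the same side of the line through B and C. Then ∠ABC + ∠BCD ≥ π; moreover, if ∠ABC + ∠BCD = π then dist(A,D) = 1. -/
open Real EuclideanGeometry

abbrev Pt := EuclideanSpace ℝ (Fin 2)

/-! Put `u = A - B`, `v = C - B`, `w = D - C`, unit vectors with `∠ABC = ∠(u, v)` and
`∠BCD = π - ∠(v, w)`, so the claim is `⟪v, u⟫ ≤ ⟪v, w⟫`. Let `s = ⟪v, u⟫`, `t = ⟪v, w⟫`, and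
`p = ω(v, u)`, `q = ω(v, w)` for the area form `ω`. The same-side hypothesis says `pq > 0`, and in
the plane `⟪u, w⟫ = st + pq`, whence `|A - D|² = 1 + 2((1 - s)(1 + t) - pq)`. So `|A - D| ≥ 1`
gives `pq ≤ (1 - s)(1 + t)`; squaring, with `p² = 1 - s²` and `q² = 1 - t²`, yields
`(1 + s)(1 - t) ≤ (1 - s)(1 + t)`, i.e. `s ≤ t`. If `s = t`, then `pq = 1 - s²` and `|A - D| = 1`. -/

open RealInnerProductSpace

theorem le_of_mul_le_one_sub_mul_one_add {s t p q : ℝ} (hp : p ^ 2 = 1 - s ^ 2)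
    (hq : q ^ 2 = 1 - t ^ 2) (hpq : 0 < p * q) (h : p * q ≤ (1 - s) * (1 + t)) : s ≤ t := by
  have hpos : 0 < (1 - s) * (1 + t) := hpq.trans_le h
  have hsq : (1 - s) * (1 + t) * ((1 + s) * (1 - t)) ≤ ((1 - s) * (1 + t)) ^ 2 :=
    calc _ = (p * q) ^ 2 := by rw [mul_pow, hp, hq]; ring
      _ ≤ _ := pow_le_pow_left₀ hpq.le h 2
  have hcancel : (1 + s) * (1 - t) ≤ (1 - s) * (1 + t) := by
    rw [sq] at hsq
    exact le_of_mul_le_mul_left hsq hpos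
  linarith

section

variable {V P : Type*} [NormedAddCommGroup V] [InnerProductSpace ℝ V] [MetricSpace P]
  [NormedAddTorsor V P]

theorem InnerProductGeometry.angle_le_angle_of_inner_le {x y x' y' : V} (hx : ‖x‖ = 1)
    (hy : ‖y‖ = 1) (hx' : ‖x'‖ = 1) (hy' : ‖y'‖ = 1) (h : ⟪x, y⟫ ≤ ⟪x', y'⟫) :
    angle x' y' ≤ angle x y := by
  rw [inner_eq_cos_angle_of_norm_eq_one hx hy, inner_eq_cos_angle_of_norm_eq_one hx' hy'] at h
  exact (Real.strictAntiOn_cos.le_iff_ge ⟨angle_nonneg _ _, angle_le_pi _ _⟩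
    ⟨angle_nonneg _ _, angle_le_pi _ _⟩).mp h

namespace Orientation

variable [Fact (Module.finrank ℝ V = 2)] (o : Orientation ℝ V (Fin 2))

local notation "ω" => o.areaForm

theorem oangle_sign_eq_sign_areaForm (x y : V) :
    (o.oangle x y).sign = SignType.sign (ω x y) := by
  have him : (o.kahler x y).im = ω x y := by simp [o.kahler_apply_apply]
  rw [Real.Angle.sign, oangle, Real.Angle.sin_coe, Complex.sin_arg, ← him]
  by_cases h : o.kahler x y = 0
  · simp [h]
  · rw [div_eq_mul_inv, sign_mul, sign_pos (inv_pos.mpr (norm_pos_iff.mpr h)), mul_one]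

theorem areaForm_mul_areaForm_pos_of_sSameSide {A B C D : P} (hBC : B ≠ C)
    (h : line[ℝ, B, C].SSameSide A D) :
    0 < ω (C -ᵥ B) (A -ᵥ B) * ω (C -ᵥ B) (D -ᵥ B) := by
  let _ : Module.Oriented ℝ V (Fin 2) := ⟨o⟩
  have hsign (X : P) : (∡ B X C).sign = SignType.sign (ω (C -ᵥ B) (X -ᵥ B)) := by
    change (o.oangle (B -ᵥ X) (C -ᵥ X)).sign = _
    rw [oangle_sign_eq_sign_areaForm, ← vsub_sub_vsub_cancel_right C X B,
      ← neg_vsub_eq_vsub_rev X B, o.areaForm_swap (C -ᵥ B)]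
    simp only [map_neg, map_sub, LinearMap.neg_apply, areaForm_apply_self, neg_zero, sub_zero]
  have hA : (∡ B A C).sign ≠ 0 := by
    rw [Ne, oangle_sign_eq_zero_iff_collinear]
    exact fun hcol => h.2.1 (hcol.mem_affineSpan_of_mem_of_ne (by simp) (by simp) (by simp) hBC)
  rw [← sign_eq_one_iff, sign_mul, ← hsign, ← hsign,
    h.oangle_sign_eq (left_mem_affineSpan_pair ℝ B C) (right_mem_affineSpan_pair ℝ B C)]
  revert hA
  generalize (∡ B A C).sign = s
  decide +revert

variable {o} {u v w : V}

theorem areaForm_sq_of_norm_eq_one (hu : ‖u‖ = 1) (hv : ‖v‖ = 1) :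
    ω u v ^ 2 = 1 - ⟪u, v⟫ ^ 2 := by
  have h := o.inner_sq_add_areaForm_sq u v
  rw [hu, hv] at h
  linear_combination h

theorem norm_sub_sub_sq_of_norm_eq_one (hu : ‖u‖ = 1) (hv : ‖v‖ = 1) (hw : ‖w‖ = 1) :
    ‖u - v - w‖ ^ 2 = 1 + 2 * ((1 - ⟪v, u⟫) * (1 + ⟪v, w⟫) - ω v u * ω v w) := by
  have huw := o.inner_mul_inner_add_areaForm_mul_areaForm v u w
  rw [hv] at huw
  rw [norm_sub_sq_real, norm_sub_sq_real, inner_sub_left, hu, hv, hw, real_inner_comm v u]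
  linear_combination 2 * huw

theorem inner_le_inner_of_areaForm_mul_pos (hu : ‖u‖ = 1) (hv : ‖v‖ = 1) (hw : ‖w‖ = 1)
    (hside : 0 < ω v u * ω v w) (h : 1 ≤ ‖u - v - w‖) : ⟪v, u⟫ ≤ ⟪v, w⟫ := by
  refine le_of_mul_le_one_sub_mul_one_add (o.areaForm_sq_of_norm_eq_one hv hu)
    (o.areaForm_sq_of_norm_eq_one hv hw) hside ?_
  have := o.norm_sub_sub_sq_of_norm_eq_one hu hv hw
  nlinarith

theorem norm_sub_sub_eq_one_of_inner_eq (hu : ‖u‖ = 1) (hv : ‖v‖ = 1) (hw : ‖w‖ = 1)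
    (hside : 0 < ω v u * ω v w) (heq : ⟪v, u⟫ = ⟪v, w⟫) : ‖u - v - w‖ = 1 := by
  have hp := o.areaForm_sq_of_norm_eq_one hv hu
  have hq := o.areaForm_sq_of_norm_eq_one hv hw
  have hpq : ω v u * ω v w = 1 - ⟪v, u⟫ ^ 2 := by
    refine (sq_eq_sq₀ hside.le ?_).mp ?_
    · rw [← hp]; positivity
    · rw [mul_pow, hp, hq, ← heq]; ring
  have hsq := o.norm_sub_sub_sq_of_norm_eq_one hu hv hw
  rw [hpq, ← heq] at hsq
  refine (pow_eq_one_iff_of_nonneg (norm_nonneg _) two_ne_zero).mp ?_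
  linear_combination hsq

end Orientation

end

/-- If `A B C D` is a unit path with `dist A D ≥ 1` and `A`, `D` lie strictly on the
same side of the line through `B` and `C`, then `∠ A B C + ∠ B C D ≥ π`; moreover,
if `∠ A B C + ∠ B C D = π`, then `dist A D = 1`. -/
theorem angle_sum_ge_pi (A B C D : Pt)
    (hAB : dist A B = 1) (hBC : dist B C = 1) (hCD : dist C D = 1)
    (hAD : 1 ≤ dist A D)
    (hside : (affineSpan ℝ ({B, C} : Set Pt)).SSameSide A D) :
    π ≤ EuclideanGeometry.angle A B C + EuclideanGeometry.angle B C D ∧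
      (EuclideanGeometry.angle A B C + EuclideanGeometry.angle B C D = π →
        dist A D = 1) := by
  have : Fact (Module.finrank ℝ Pt = 2) := ⟨finrank_euclideanSpace_fin⟩
  let o : Orientation ℝ Pt (Fin 2) := (EuclideanSpace.basisFun (Fin 2) ℝ).toBasis.orientation
  have hu : ‖A -ᵥ B‖ = 1 := by rwa [← dist_eq_norm_vsub]
  have hv : ‖C -ᵥ B‖ = 1 := by rwa [← dist_eq_norm_vsub, dist_comm]
  have hw : ‖D -ᵥ C‖ = 1 := by rwa [← dist_eq_norm_vsub, dist_comm]
  have hBC' : B ≠ C := dist_ne_zero.mp (by rw [hBC]; exact one_ne_zero)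
  have hpos : 0 < o.areaForm (C -ᵥ B) (A -ᵥ B) * o.areaForm (C -ᵥ B) (D -ᵥ C) := by
    rw [← vsub_sub_vsub_cancel_right D C B, map_sub, o.areaForm_apply_self, sub_zero]
    exact o.areaForm_mul_areaForm_pos_of_sSameSide hBC' hside
  have hAD' : ‖(A -ᵥ B) - (C -ᵥ B) - (D -ᵥ C)‖ = dist A D := by
    rw [vsub_sub_vsub_cancel_right, vsub_sub_vsub_cancel_right, dist_eq_norm_vsub]
  have hBCD : ∠ B C D = π - InnerProductGeometry.angle (C -ᵥ B) (D -ᵥ C) := by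
    rw [EuclideanGeometry.angle, ← neg_vsub_eq_vsub_rev C B, InnerProductGeometry.angle_neg_left]
  rw [EuclideanGeometry.angle, hBCD, InnerProductGeometry.angle_comm]
  constructor
  · have := o.inner_le_inner_of_areaForm_mul_pos hu hv hw hpos (hAD' ▸ hAD)
    linarith [InnerProductGeometry.angle_le_angle_of_inner_le hv hu hv hw this]
  · intro hsum
    have hcos : ⟪C -ᵥ B, A -ᵥ B⟫ = ⟪C -ᵥ B, D -ᵥ C⟫ := by
      rw [InnerProductGeometry.inner_eq_cos_angle_of_norm_eq_one hv hu,
        InnerProductGeometry.inner_eq_cos_angle_of_norm_eq_one hv hw]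
      congr 1; linarith
    rw [← hAD']
    exact o.norm_sub_sub_eq_one_of_inner_eq hu hv hw hpos hcos
end

section
/- Let P be a penny configuration in general position, and let A, B ∈ P with dist(A,B) = 1 such that both A and B have degree 5. Then A and B have a common unit-neighbor, i.e., there exists C ∈ P with dist(C,A) = 1 and dist(C,B) = 1. -/
open Real EuclideanGeometry

/-- A penny configuration in general position: a finite set of points in the plane
such that any two distinct points are at distance at least 1 and no three points
are collinear. -/
def PennyGP (P : Finset Pt) : Prop :=
  (∀ p ∈ P, ∀ q ∈ P, p ≠ q → 1 ≤ dist p q) ∧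
  (∀ p ∈ P, ∀ q ∈ P, ∀ r ∈ P, p ≠ q → p ≠ r → q ≠ r →
    ¬ Collinear ℝ ({p, q, r} : Set Pt))

/-- The degree of a point `A` in the penny graph of `P`: the number of points of `P`
at distance exactly 1 from `A`. -/
noncomputable def deg (P : Finset Pt) (A : Pt) : ℕ :=
  {q : Pt | q ∈ P ∧ dist A q = 1}.ncard

/-!
Put `A` at the origin and `B` at `(1, 0)`, and suppose `A` and `B` have no common
unit-neighbour. The four other unit-neighbours `C` of `A` are at distance `> 1` from `B` and
off the line `AB`, so `∠BAC ∈ (π/3, π)`, and two of them on the same side of `AB` differ in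
angle by at least `π/3`. Hence exactly two lie on each side: `C₁, C₂` above and `C₁', C₂'` below
with `∠BAC₁ + π/3 ≤ ∠BAC₂` and `∠BAC₁' + π/3 ≤ ∠BAC₂'`; the same holds around `B`. Since `C₂` and
`C₂'` are `1` apart, `∠BAC₂ + ∠BAC₂' ≤ 5π/3`, so `∠BAC₁ + ∠BAC₁' ≤ π`, and likewise at `B`. On
the other hand the neighbours of `A` and `B` nearest to `AB` on a common side are `1` apart,
which forces their angles at `A` and `B` to add up to at least `π`. Adding everything up,
`∠BAC₁ + ∠BAC₁' = π`, so `C₁, A, C₁'` are collinear, against general position.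
-/

lemma pi_div_three_le_of_cos_le {t : ℝ} (h₀ : 0 ≤ t) (h : cos t ≤ 1 / 2) : π / 3 ≤ t := by
  by_contra! hlt
  have := cos_lt_cos_of_nonneg_of_le_pi h₀ (by linarith [pi_pos]) hlt
  rw [cos_pi_div_three] at this
  linarith

lemma pi_div_three_lt_of_cos_lt {t : ℝ} (h₀ : 0 ≤ t) (h : cos t < 1 / 2) : π / 3 < t := by
  by_contra! hle
  have := cos_le_cos_of_nonneg_of_le_pi h₀ (by linarith [pi_pos]) hle
  rw [cos_pi_div_three] at this
  linarith

lemma one_add_cos_add_sub_cos_sub_cos (a b : ℝ) :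
    1 + cos (a + b) - cos a - cos b = -4 * cos ((a + b) / 2) * sin (a / 2) * sin (b / 2) := by
  obtain ⟨u, rfl⟩ : ∃ u, a = 2 * u := ⟨a / 2, by ring⟩
  obtain ⟨v, rfl⟩ : ∃ v, b = 2 * v := ⟨b / 2, by ring⟩
  rw [show 2 * u + 2 * v = 2 * (u + v) by ring, show 2 * (u + v) / 2 = u + v by ring,
    show 2 * u / 2 = u by ring, show 2 * v / 2 = v by ring,
    cos_two_mul, cos_two_mul, cos_two_mul, cos_add]
  linear_combination (2 * cos v ^ 2 - 2) * sin_sq_add_cos_sq u - 2 * sin u ^ 2 * sin_sq_add_cos_sq v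

lemma pi_le_add_of_cos_add_cos_le {a b : ℝ} (ha : 0 < a) (hb : 0 < b)
    (h : cos a + cos b ≤ 1 + cos (a + b)) : π ≤ a + b := by
  by_contra! hlt
  have hcos : 0 < cos ((a + b) / 2) := cos_pos_of_mem_Ioo ⟨by linarith, by linarith⟩
  have hsina : 0 < sin (a / 2) := sin_pos_of_pos_of_lt_pi (by positivity) (by linarith)
  have hsinb : 0 < sin (b / 2) := sin_pos_of_pos_of_lt_pi (by positivity) (by linarith)
  have := one_add_cos_add_sub_cos_sub_cos a b
  nlinarith [mul_pos (mul_pos hcos hsina) hsinb]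

lemma dist_sq_eq_fin_two (p q : Pt) : dist p q ^ 2 = (p 0 - q 0) ^ 2 + (p 1 - q 1) ^ 2 := by
  simp [EuclideanSpace.dist_sq_eq, Fin.sum_univ_two, Real.dist_eq, sq_abs]

-- Coordinates of `p` in the frame with origin `A`, first axis `B - A` and second axis its rotation
-- by `π/2`; the frame is orthonormal when `dist A B = 1`, and the sign of `frameY` is the side of
-- line `AB` on which `p` lies.
noncomputable def frameX (A B p : Pt) : ℝ := (p 0 - A 0) * (B 0 - A 0) + (p 1 - A 1) * (B 1 - A 1)

noncomputable def frameY (A B p : Pt) : ℝ := (p 1 - A 1) * (B 0 - A 0) - (p 0 - A 0) * (B 1 - A 1)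

section Frame
variable {A B C D : Pt}

lemma frameX_left : frameX A B A = 0 := by simp [frameX]

lemma frameY_left : frameY A B A = 0 := by simp [frameY]

lemma frameY_right : frameY A B B = 0 := by unfold frameY; ring

lemma frameY_swap (p : Pt) : frameY B A p = -frameY A B p := by unfold frameY; ring

lemma sub_sq_add_sub_sq_of_dist_eq_one (hAB : dist A B = 1) :
    (B 0 - A 0) ^ 2 + (B 1 - A 1) ^ 2 = 1 := by
  rw [← dist_sq_eq_fin_two, dist_comm, hAB, one_pow]

lemma frameX_right (hAB : dist A B = 1) : frameX A B B = 1 := by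
  unfold frameX; linear_combination sub_sq_add_sub_sq_of_dist_eq_one hAB

lemma frameX_swap (hAB : dist A B = 1) (p : Pt) : frameX B A p = 1 - frameX A B p := by
  unfold frameX; linear_combination sub_sq_add_sub_sq_of_dist_eq_one hAB

lemma dist_sq_eq_frame (hAB : dist A B = 1) (p q : Pt) :
    dist p q ^ 2 = (frameX A B p - frameX A B q) ^ 2 + (frameY A B p - frameY A B q) ^ 2 := by
  rw [dist_sq_eq_fin_two]; unfold frameX frameY
  linear_combination (-((p 0 - q 0) ^ 2 + (p 1 - q 1) ^ 2)) * sub_sq_add_sub_sq_of_dist_eq_one hAB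

lemma frameX_sq_add_frameY_sq (hAB : dist A B = 1) (hAC : dist A C = 1) :
    frameX A B C ^ 2 + frameY A B C ^ 2 = 1 := by
  have h := dist_sq_eq_frame hAB C A
  rw [dist_comm, hAC, frameX_left, frameY_left] at h
  linarith

lemma cos_angle_eq_frameX (hAB : dist A B = 1) (hAC : dist A C = 1) :
    cos (∠ B A C) = frameX A B C := by
  rw [EuclideanGeometry.angle, InnerProductGeometry.cos_angle, ← dist_eq_norm_vsub,
    ← dist_eq_norm_vsub, dist_comm, hAB, dist_comm, hAC, mul_one, div_one,
    EuclideanSpace.inner_eq_star_dotProduct]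
  simp [frameX, dotProduct, Fin.sum_univ_two]

lemma sin_angle_eq_abs_frameY (hAB : dist A B = 1) (hAC : dist A C = 1) :
    sin (∠ B A C) = |frameY A B C| := by
  have hsin : 0 ≤ sin (∠ B A C) :=
    sin_nonneg_of_nonneg_of_le_pi (angle_nonneg _ _ _) (angle_le_pi _ _ _)
  rw [← sqrt_sq_eq_abs, ← sqrt_sq hsin, sin_sq, cos_angle_eq_frameX hAB hAC]
  congr 1
  linarith [frameX_sq_add_frameY_sq hAB hAC]

lemma frameY_ne_zero (hAB : dist A B = 1) (hAC : dist A C = 1)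
    (h : ¬ Collinear ℝ ({A, B, C} : Set Pt)) : frameY A B C ≠ 0 := by
  intro hY
  apply h
  rw [Set.insert_comm]
  exact collinear_iff_eq_or_eq_or_sin_eq_zero.2 <| Or.inr <| Or.inr <| by
    rw [sin_angle_eq_abs_frameY hAB hAC, hY, abs_zero]

lemma angle_mem_Ioo_of_frameY_ne_zero (hAB : dist A B = 1) (hAC : dist A C = 1)
    (hY : frameY A B C ≠ 0) : ∠ B A C ∈ Set.Ioo 0 π := by
  have hsin : sin (∠ B A C) ≠ 0 := by
    rw [sin_angle_eq_abs_frameY hAB hAC]; exact abs_ne_zero.2 hY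
  refine ⟨(angle_nonneg _ _ _).lt_of_ne ?_, (angle_le_pi _ _ _).lt_of_ne ?_⟩
  · rintro h; rw [← h, sin_zero] at hsin; exact hsin rfl
  · rintro h; rw [h, sin_pi] at hsin; exact hsin rfl

lemma pi_div_three_lt_angle (hAB : dist A B = 1) (hAC : dist A C = 1) (hBC : 1 < dist B C) :
    π / 3 < ∠ B A C := by
  refine pi_div_three_lt_of_cos_lt (angle_nonneg _ _ _) ?_
  have h := dist_sq_eq_frame hAB B C
  rw [frameX_right hAB, frameY_right] at h
  rw [cos_angle_eq_frameX hAB hAC]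
  nlinarith [frameX_sq_add_frameY_sq hAB hAC]

lemma dist_sq_eq_two_sub_two_mul_cos_angle_sub (hAB : dist A B = 1) (hAC : dist A C = 1)
    (hAD : dist A D = 1) (hside : 0 ≤ frameY A B C * frameY A B D) :
    dist C D ^ 2 = 2 - 2 * cos (∠ B A C - ∠ B A D) := by
  rw [dist_sq_eq_frame hAB, cos_sub, cos_angle_eq_frameX hAB hAC, cos_angle_eq_frameX hAB hAD,
    sin_angle_eq_abs_frameY hAB hAC, sin_angle_eq_abs_frameY hAB hAD, ← abs_mul,
    abs_of_nonneg hside]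
  linear_combination frameX_sq_add_frameY_sq hAB hAC + frameX_sq_add_frameY_sq hAB hAD

lemma dist_sq_eq_two_sub_two_mul_cos_angle_add (hAB : dist A B = 1) (hAC : dist A C = 1)
    (hAD : dist A D = 1) (hside : frameY A B C * frameY A B D ≤ 0) :
    dist C D ^ 2 = 2 - 2 * cos (∠ B A C + ∠ B A D) := by
  rw [dist_sq_eq_frame hAB, cos_add, cos_angle_eq_frameX hAB hAC, cos_angle_eq_frameX hAB hAD,
    sin_angle_eq_abs_frameY hAB hAC, sin_angle_eq_abs_frameY hAB hAD, ← abs_mul,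
    abs_of_nonpos hside]
  linear_combination frameX_sq_add_frameY_sq hAB hAC + frameX_sq_add_frameY_sq hAB hAD

lemma dist_sq_eq_three_add_two_mul_cos_angle_add (hAB : dist A B = 1) (hAC : dist A C = 1)
    (hBD : dist B D = 1) (hside : 0 ≤ frameY A B C * frameY A B D) :
    dist C D ^ 2 = 3 + 2 * cos (∠ B A C + ∠ A B D) - 2 * cos (∠ B A C) - 2 * cos (∠ A B D) := by
  have hBA : dist B A = 1 := by rw [dist_comm, hAB]
  have hD := frameX_sq_add_frameY_sq hBA hBD
  have hswap : frameY B A D = -frameY A B D := frameY_swap D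
  rw [frameX_swap hAB, hswap] at hD
  rw [dist_sq_eq_frame hAB, cos_add, cos_angle_eq_frameX hAB hAC, cos_angle_eq_frameX hBA hBD,
    sin_angle_eq_abs_frameY hAB hAC, sin_angle_eq_abs_frameY hBA hBD, frameX_swap hAB,
    hswap, abs_neg, ← abs_mul, abs_of_nonneg hside]
  linear_combination frameX_sq_add_frameY_sq hAB hAC + hD

lemma pi_div_three_le_abs_angle_sub (hAB : dist A B = 1) (hAC : dist A C = 1)
    (hAD : dist A D = 1) (hCD : 1 ≤ dist C D) (hside : 0 ≤ frameY A B C * frameY A B D) :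
    π / 3 ≤ |∠ B A C - ∠ B A D| := by
  refine pi_div_three_le_of_cos_le (abs_nonneg _) ?_
  rw [cos_abs]
  nlinarith [dist_sq_eq_two_sub_two_mul_cos_angle_sub hAB hAC hAD hside]

lemma angle_add_angle_le (hAB : dist A B = 1) (hAC : dist A C = 1) (hAD : dist A D = 1)
    (hCD : 1 ≤ dist C D) (hside : frameY A B C * frameY A B D ≤ 0) :
    ∠ B A C + ∠ B A D ≤ 5 * π / 3 := by
  by_contra! hlt
  have h := pi_div_three_le_of_cos_le (t := 2 * π - (∠ B A C + ∠ B A D))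
    (by linarith [angle_le_pi B A C, angle_le_pi B A D]) <| by
      rw [cos_two_pi_sub]
      nlinarith [dist_sq_eq_two_sub_two_mul_cos_angle_add hAB hAC hAD hside]
  linarith

lemma pi_le_angle_add_angle (hAB : dist A B = 1) (hAC : dist A C = 1) (hBD : dist B D = 1)
    (hCD : 1 ≤ dist C D) (hside : 0 < frameY A B C * frameY A B D) :
    π ≤ ∠ B A C + ∠ A B D := by
  have hBA : dist B A = 1 := by rw [dist_comm, hAB]
  have hYD : frameY B A D ≠ 0 := by
    rw [frameY_swap, neg_ne_zero]; exact right_ne_zero_of_mul hside.ne'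
  refine pi_le_add_of_cos_add_cos_le
    (angle_mem_Ioo_of_frameY_ne_zero hAB hAC (left_ne_zero_of_mul hside.ne')).1
    (angle_mem_Ioo_of_frameY_ne_zero hBA hBD hYD).1 ?_
  nlinarith [dist_sq_eq_three_add_two_mul_cos_angle_add hAB hAC hBD hside.le]

lemma wbtw_of_angle_add_angle_eq_pi (hAB : dist A B = 1) (hAC : dist A C = 1)
    (hAD : dist A D = 1) (hside : frameY A B C * frameY A B D ≤ 0)
    (h : ∠ B A C + ∠ B A D = π) : Wbtw ℝ C A D := by
  have hCD : dist C D = 2 := by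
    have := dist_sq_eq_two_sub_two_mul_cos_angle_add hAB hAC hAD hside
    rw [h, cos_pi] at this
    nlinarith [dist_nonneg (x := C) (y := D)]
  rw [← dist_add_dist_eq_iff, dist_comm, hAC, hAD, hCD]
  norm_num

end Frame

section Separated
variable {α : Type*} {s : Finset α} {f : α → ℝ} {a b δ : ℝ}

lemma Finset.card_le_two_of_le_abs_sub (hab : b ≤ a + 2 * δ) (hf : ∀ c ∈ s, f c ∈ Set.Ioo a b)
    (hsep : ∀ c ∈ s, ∀ d ∈ s, c ≠ d → δ ≤ |f c - f d|) : s.card ≤ 2 := by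
  by_contra! h
  obtain ⟨c, hc, d, hd, e, he, hcd, hce, hde⟩ := Finset.two_lt_card.1 h
  have := hf c hc; have := hf d hd; have := hf e he
  rcases le_abs.1 (hsep c hc d hd hcd) with h₁ | h₁ <;>
    rcases le_abs.1 (hsep c hc e he hce) with h₂ | h₂ <;>
    rcases le_abs.1 (hsep d hd e he hde) with h₃ | h₃ <;>
    simp only [Set.mem_Ioo] at * <;> linarith

lemma Finset.exists_add_le_of_one_lt_card (hs : 1 < s.card)
    (hsep : ∀ c ∈ s, ∀ d ∈ s, c ≠ d → δ ≤ |f c - f d|) : ∃ c ∈ s, ∃ d ∈ s, f c + δ ≤ f d := by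
  obtain ⟨c, hc, d, hd, hcd⟩ := Finset.one_lt_card.1 hs
  rcases le_abs.1 (hsep c hc d hd hcd) with h | h
  · exact ⟨d, hd, c, hc, by linarith⟩
  · exact ⟨c, hc, d, hd, by linarith⟩

lemma Finset.exists_add_le_of_card_eq_four {y : α → ℝ} (hs : s.card = 4) (hab : b ≤ a + 2 * δ)
    (hf : ∀ c ∈ s, f c ∈ Set.Ioo a b) (hy : ∀ c ∈ s, y c ≠ 0)
    (hsep : ∀ c ∈ s, ∀ d ∈ s, c ≠ d → 0 < y c * y d → δ ≤ |f c - f d|) :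
    (∃ c ∈ s, ∃ d ∈ s, 0 < y c ∧ 0 < y d ∧ f c + δ ≤ f d) ∧
      (∃ c ∈ s, ∃ d ∈ s, y c < 0 ∧ y d < 0 ∧ f c + δ ≤ f d) := by
  classical
  set t := s.filter (0 < y ·)
  set u := s.filter (y · < 0)
  have hcover : s ⊆ t ∪ u := fun c hc => by
    rcases (hy c hc).lt_or_gt with h | h <;> simp [t, u, hc, h]
  have hsepOn : ∀ v ⊆ s, (∀ c ∈ v, ∀ d ∈ v, 0 < y c * y d) →
      ∀ c ∈ v, ∀ d ∈ v, c ≠ d → δ ≤ |f c - f d| := fun v hv hside c hc d hd hcd =>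
    hsep c (hv hc) d (hv hd) hcd (hside c hc d hd)
  have hsepT := hsepOn t (filter_subset _ _) fun c hc d hd =>
    mul_pos (mem_filter.1 hc).2 (mem_filter.1 hd).2
  have hsepU := hsepOn u (filter_subset _ _) fun c hc d hd =>
    mul_pos_of_neg_of_neg (mem_filter.1 hc).2 (mem_filter.1 hd).2
  have hT : t.card ≤ 2 :=
    card_le_two_of_le_abs_sub hab (fun c hc => hf c (filter_subset _ _ hc)) hsepT
  have hU : u.card ≤ 2 :=
    card_le_two_of_le_abs_sub hab (fun c hc => hf c (filter_subset _ _ hc)) hsepU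
  have hcard : s.card ≤ t.card + u.card := (card_le_card hcover).trans (card_union_le t u)
  obtain ⟨c, hc, d, hd, h⟩ := exists_add_le_of_one_lt_card (by omega) hsepT
  obtain ⟨c', hc', d', hd', h'⟩ := exists_add_le_of_one_lt_card (by omega) hsepU
  rw [mem_filter] at hc hd hc' hd'
  exact ⟨⟨c, hc.1, d, hd.1, hc.2, hd.2, h⟩, ⟨c', hc'.1, d', hd'.1, hc'.2, hd'.2, h'⟩⟩

end Separated

lemma deg_eq_card_filter (P : Finset Pt) (A : Pt) :
    deg P A = (P.filter (dist A · = 1)).card := by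
  rw [deg, ← Set.ncard_coe_finset, Finset.coe_filter]

namespace PennyGP
variable {P : Finset Pt} {A B : Pt}

theorem exists_separated_pairs (hP : PennyGP P) (hA : A ∈ P) (hB : B ∈ P)
    (hAB : dist A B = 1) (hdeg : deg P A = 5) (hno : ∀ C ∈ P, dist C A = 1 → dist C B ≠ 1) :
    (∃ C₁ ∈ P, ∃ C₂ ∈ P, dist A C₁ = 1 ∧ dist A C₂ = 1 ∧
      0 < frameY A B C₁ ∧ 0 < frameY A B C₂ ∧ ∠ B A C₁ + π / 3 ≤ ∠ B A C₂) ∧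
    (∃ C₁ ∈ P, ∃ C₂ ∈ P, dist A C₁ = 1 ∧ dist A C₂ = 1 ∧
      frameY A B C₁ < 0 ∧ frameY A B C₂ < 0 ∧ ∠ B A C₁ + π / 3 ≤ ∠ B A C₂) := by
  set s := (P.filter (dist A · = 1)).erase B
  have hcard : s.card = 4 := by
    rw [Finset.card_erase_of_mem (Finset.mem_filter.2 ⟨hB, hAB⟩), ← deg_eq_card_filter, hdeg]
  have hmem : ∀ C ∈ s, C ∈ P ∧ dist A C = 1 ∧ C ≠ B := fun C hC => by
    simp only [s, Finset.mem_erase, Finset.mem_filter] at hC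
    exact ⟨hC.2.1, hC.2.2, hC.1⟩
  have hY : ∀ C ∈ s, frameY A B C ≠ 0 := fun C hC => by
    obtain ⟨hCP, hAC, hCB⟩ := hmem C hC
    exact frameY_ne_zero hAB hAC <| hP.2 A hA B hB C hCP (dist_pos.1 (hAB ▸ one_pos))
      (dist_pos.1 (hAC ▸ one_pos)) hCB.symm
  have hangle : ∀ C ∈ s, ∠ B A C ∈ Set.Ioo (π / 3) π := fun C hC => by
    obtain ⟨hCP, hAC, hCB⟩ := hmem C hC
    have hBC : 1 < dist B C := by
      rw [dist_comm]
      exact (hP.1 C hCP B hB hCB).lt_of_ne (hno C hCP (by rw [dist_comm, hAC])).symm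
    exact ⟨pi_div_three_lt_angle hAB hAC hBC,
      (angle_mem_Ioo_of_frameY_ne_zero hAB hAC (hY C hC)).2⟩
  have hsep : ∀ C ∈ s, ∀ D ∈ s, C ≠ D → 0 < frameY A B C * frameY A B D →
      π / 3 ≤ |∠ B A C - ∠ B A D| := fun C hC D hD hCD hside =>
    pi_div_three_le_abs_angle_sub hAB (hmem C hC).2.1 (hmem D hD).2.1
      (hP.1 C (hmem C hC).1 D (hmem D hD).1 hCD) hside.le
  obtain ⟨⟨C₁, h₁, C₂, h₂, hup⟩, ⟨C₁', h₁', C₂', h₂', hdown⟩⟩ :=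
    Finset.exists_add_le_of_card_eq_four hcard (by linarith) hangle hY hsep
  exact ⟨⟨C₁, (hmem C₁ h₁).1, C₂, (hmem C₂ h₂).1, (hmem C₁ h₁).2.1, (hmem C₂ h₂).2.1, hup⟩,
    ⟨C₁', (hmem C₁' h₁').1, C₂', (hmem C₂' h₂').1, (hmem C₁' h₁').2.1, (hmem C₂' h₂').2.1, hdown⟩⟩

end PennyGP

/-- In a penny configuration in general position, two adjacent points of degree 5
have a common unit-neighbor. -/
theorem adjacent_degree_five_common_neighbor (P : Finset Pt) (hP : PennyGP P)
    (A B : Pt) (hA : A ∈ P) (hB : B ∈ P) (hAB : dist A B = 1)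
    (hdA : deg P A = 5) (hdB : deg P B = 5) :
    ∃ C ∈ P, dist C A = 1 ∧ dist C B = 1 := by
  by_contra! hno
  have hBA : dist B A = 1 := by rw [dist_comm, hAB]
  obtain ⟨⟨C₁, hC₁, C₂, hC₂, hAC₁, hAC₂, hC₁Y, hC₂Y, hC₁₂⟩,
      ⟨C₁', hC₁', C₂', hC₂', hAC₁', hAC₂', hC₁'Y, hC₂'Y, hC₁₂'⟩⟩ :=
    hP.exists_separated_pairs hA hB hAB hdA hno
  obtain ⟨⟨D₁, hD₁, D₂, hD₂, hBD₁, hBD₂, hD₁Y, hD₂Y, hD₁₂⟩,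
      ⟨D₁', hD₁', D₂', hD₂', hBD₁', hBD₂', hD₁'Y, hD₂'Y, hD₁₂'⟩⟩ :=
    hP.exists_separated_pairs hB hA hBA hdB fun C hC hCB hCA => hno C hC hCA hCB
  have hCD : ∀ C ∈ P, ∀ D ∈ P, dist A C = 1 → dist B D = 1 → 1 ≤ dist C D := by
    rintro C hC D hD hAC hBD
    refine hP.1 C hC D hD ?_
    rintro rfl
    exact hno C hC (by rw [dist_comm, hAC]) (by rw [dist_comm, hBD])
  -- The frame at `B` swaps the sides of `AB`: `C₁` faces `D₁'` and `C₁'` faces `D₁`.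
  rw [frameY_swap, neg_neg_iff_pos] at hD₁'Y
  rw [frameY_swap, neg_pos] at hD₁Y
  have h₁ := pi_le_angle_add_angle hAB hAC₁ hBD₁' (hCD _ hC₁ _ hD₁' hAC₁ hBD₁')
    (mul_pos hC₁Y hD₁'Y)
  have h₁' := pi_le_angle_add_angle hAB hAC₁' hBD₁ (hCD _ hC₁' _ hD₁ hAC₁' hBD₁)
    (mul_pos_of_neg_of_neg hC₁'Y hD₁Y)
  have h₂ := angle_add_angle_le hAB hAC₂ hAC₂' (hP.1 _ hC₂ _ hC₂' (by rintro rfl; linarith))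
    (mul_neg_of_pos_of_neg hC₂Y hC₂'Y).le
  have h₂' := angle_add_angle_le hBA hBD₂ hBD₂' (hP.1 _ hD₂ _ hD₂' (by rintro rfl; linarith))
    (mul_neg_of_pos_of_neg hD₂Y hD₂'Y).le
  have hπ : ∠ B A C₁ + ∠ B A C₁' = π := by linarith
  have hC₁AC₁' : Wbtw ℝ C₁ A C₁' :=
    wbtw_of_angle_add_angle_eq_pi hAB hAC₁ hAC₁' (mul_neg_of_pos_of_neg hC₁Y hC₁'Y).le hπ
  exact hP.2 C₁ hC₁ A hA C₁' hC₁' (dist_pos.1 (hAC₁ ▸ one_pos)).symm (by rintro rfl; linarith)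
    (dist_pos.1 (hAC₁' ▸ one_pos)) hC₁AC₁'.collinear
end

section
/- Let P be a penny configuration in general position and let X, Y, Z ∈ P be pairwise at distance exactly 1, each of degree 5. Then either some point W ∈ P \ {X,Y,Z} is at distance exactly 1 from at least two of X, Y, Z, or the following holds: the set N of points of P \ {X,Y,Z} at distance exactly 1 from at least one of X, Y, Z has exactly 9 elements, and N admits a cyclic ordering w₁, w₂, …, w₉ in which every two cyclically consecutive points are at distance exactly 1 (i.e., dist(wᵢ, wᵢ₊₁) = 1 for all i, indices modulo 9). -/
open Real EuclideanGeometry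

/-!
Send the plane isometrically to `ℂ` so that `X Y Z` is counterclockwise, and measure the angle
of a unit neighbour of a vertex from the outward direction at that vertex. If no point outside
the triangle is a common neighbour of two vertices, each vertex has exactly three further
neighbours, all at distance more than 1 from the other two vertices; this confines their angles
to `(-π/2, π/2)`, and being at distance at least 1 from each other they are at least `π/3` apart
in angle. A direct computation shows that the last neighbour of one vertex and the first
neighbour of the next one are at distance at least 1 only if their angles differ by at most
`2π/3`. Around the triangle these nine bounds telescope, so all of them are tight, and
tightness means distance exactly 1.
-/

open scoped Complex
open Complex (I arg)

theorem norm_cexp_sub_cexp_sq (a b : ℝ) :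
    ‖cexp (a * I) - cexp (b * I)‖ ^ 2 = 2 - 2 * cos (a - b) := by
  rw [← Complex.normSq_eq_norm_sq, Complex.normSq_apply]
  simp only [Complex.sub_re, Complex.sub_im, Complex.exp_ofReal_mul_I_re,
    Complex.exp_ofReal_mul_I_im, cos_sub]
  linear_combination sin_sq_add_cos_sq a + sin_sq_add_cos_sq b

theorem norm_cexp_sub_cexp_sub_cexp_sq (a b c : ℝ) :
    ‖cexp (a * I) - cexp (b * I) - cexp (c * I)‖ ^ 2
      = 3 - 2 * cos (a - b) - 2 * cos (a - c) + 2 * cos (b - c) := by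
  rw [← Complex.normSq_eq_norm_sq, Complex.normSq_apply]
  simp only [Complex.sub_re, Complex.sub_im, Complex.exp_ofReal_mul_I_re,
    Complex.exp_ofReal_mul_I_im, cos_sub]
  linear_combination sin_sq_add_cos_sq a + sin_sq_add_cos_sq b + sin_sq_add_cos_sq c

theorem one_sub_cos_sub_cos_add_cos_add (x y : ℝ) :
    1 - cos x - cos y + cos (x + y) = -4 * sin (x / 2) * sin (y / 2) * cos ((x + y) / 2) := by
  have hx : x = 2 * (x / 2) := by ring
  have hy : y = 2 * (y / 2) := by ring
  conv_lhs => rw [hx, hy, ← mul_add]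
  rw [add_div, cos_two_mul, cos_two_mul, cos_two_mul, cos_add]
  linear_combination (2 * cos (y / 2) ^ 2 - 2) * sin_sq_add_cos_sq (x / 2) -
    2 * sin (x / 2) ^ 2 * sin_sq_add_cos_sq (y / 2)

theorem half_le_cos_of_abs_le {x : ℝ} (hx : |x| ≤ π / 3) : 1 / 2 ≤ cos x := by
  rw [← cos_abs, ← cos_pi_div_three]
  exact cos_le_cos_of_nonneg_of_le_pi (abs_nonneg x) (by linarith [pi_pos]) hx

theorem cos_le_half_iff {x : ℝ} (hx : |x| ≤ π) : cos x ≤ 1 / 2 ↔ π / 3 ≤ |x| := by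
  rw [← cos_abs, ← cos_pi_div_three]
  exact strictAntiOn_cos.le_iff_ge ⟨abs_nonneg x, hx⟩ ⟨by positivity, by linarith [pi_pos]⟩

theorem norm_cexp_sub_cexp_le_one {a b : ℝ} (h : |a - b| ≤ π / 3) :
    ‖cexp (a * I) - cexp (b * I)‖ ≤ 1 := by
  have := half_le_cos_of_abs_le h
  nlinarith [norm_cexp_sub_cexp_sq a b, norm_nonneg (cexp (a * I) - cexp (b * I))]

theorem pi_div_three_le_abs_sub {a b : ℝ} (hab : |a - b| ≤ π)
    (h : 1 ≤ ‖cexp (a * I) - cexp (b * I)‖) : π / 3 ≤ |a - b| := by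
  rw [← cos_le_half_iff hab]
  nlinarith [norm_cexp_sub_cexp_sq a b]

theorem norm_cexp_sub_cexp_eq_one {a b : ℝ} (h : |a - b| = π / 3) :
    ‖cexp (a * I) - cexp (b * I)‖ = 1 := by
  have hsq := norm_cexp_sub_cexp_sq a b
  rw [← cos_abs, h, cos_pi_div_three] at hsq
  nlinarith [norm_nonneg (cexp (a * I) - cexp (b * I))]

theorem abs_lt_pi_div_two_of_one_lt_norm {a : ℝ} (ha : a ∈ Set.Ioc (-π) π)
    (h₁ : 1 < ‖cexp (a * I) - cexp ((5 * π / 6 : ℝ) * I)‖)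
    (h₂ : 1 < ‖cexp (a * I) - cexp ((-(5 * π / 6) : ℝ) * I)‖) : |a| < π / 2 := by
  obtain ⟨ha₁, ha₂⟩ := ha
  by_contra! h
  rcases le_abs'.1 h with h | h
  · exact h₂.not_ge (norm_cexp_sub_cexp_le_one (abs_le.2 ⟨by linarith, by linarith⟩))
  · exact h₁.not_ge (norm_cexp_sub_cexp_le_one (abs_le.2 ⟨by linarith, by linarith⟩))

-- The distance from the point at angle `a` around one vertex of a triangle to the point at angle
-- `b` around the next vertex (`IsTriangleFrame.dist_eq_norm_bridge`).
theorem norm_bridge_sq (a b : ℝ) :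
    ‖cexp (a * I) - cexp ((5 * π / 6 : ℝ) * I) - cexp ((b + 2 * π / 3 : ℝ) * I)‖ ^ 2
      = 1 - 8 * sin ((5 * π / 6 - a) / 2) * sin ((b + 5 * π / 6) / 2)
          * cos ((5 * π / 3 - (a - b)) / 2) := by
  have key := one_sub_cos_sub_cos_add_cos_add (5 * π / 6 - a) (b + 5 * π / 6)
  rw [norm_cexp_sub_cexp_sub_cexp_sq, show a - 5 * π / 6 = -(5 * π / 6 - a) by ring,
    show a - (b + 2 * π / 3) = π - (5 * π / 6 - a + (b + 5 * π / 6)) by ring,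
    show 5 * π / 6 - (b + 2 * π / 3) = π - (b + 5 * π / 6) by ring,
    cos_neg, cos_pi_sub, cos_pi_sub]
  rw [show (5 * π / 6 - a + (b + 5 * π / 6)) / 2 = (5 * π / 3 - (a - b)) / 2 by ring] at key
  linarith

theorem sub_le_of_one_le_norm_bridge {a b : ℝ} (ha : |a| < π / 2) (hb : |b| < π / 2)
    (h : 1 ≤ ‖cexp (a * I) - cexp ((5 * π / 6 : ℝ) * I) - cexp ((b + 2 * π / 3 : ℝ) * I)‖) :
    a - b ≤ 2 * π / 3 := by
  obtain ⟨ha₁, ha₂⟩ := abs_lt.1 ha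
  obtain ⟨hb₁, hb₂⟩ := abs_lt.1 hb
  have hsa : 0 < sin ((5 * π / 6 - a) / 2) := sin_pos_of_pos_of_lt_pi (by linarith) (by linarith)
  have hsb : 0 < sin ((b + 5 * π / 6) / 2) := sin_pos_of_pos_of_lt_pi (by linarith) (by linarith)
  have hcos : cos ((5 * π / 3 - (a - b)) / 2) ≤ 0 := by
    have := norm_bridge_sq a b
    nlinarith [mul_pos hsa hsb]
  by_contra! hab
  exact hcos.not_gt (cos_pos_of_mem_Ioo ⟨by linarith, by linarith⟩)

theorem norm_bridge_eq_one {a b : ℝ} (h : a - b = 2 * π / 3) :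
    ‖cexp (a * I) - cexp ((5 * π / 6 : ℝ) * I) - cexp ((b + 2 * π / 3 : ℝ) * I)‖ = 1 := by
  have hsq := norm_bridge_sq a b
  rw [h, show (5 * π / 3 - 2 * π / 3) / 2 = π / 2 by ring, cos_pi_div_two] at hsq
  nlinarith [norm_nonneg
    (cexp (a * I) - cexp ((5 * π / 6 : ℝ) * I) - cexp ((b + 2 * π / 3 : ℝ) * I))]

theorem cexp_mul_I_of_cos_sin {x a b : ℝ} (hc : cos x = a) (hs : sin x = b) :
    cexp (x * I) = a + b * I := by
  rw [Complex.exp_mul_I, ← Complex.ofReal_cos, ← Complex.ofReal_sin, hc, hs]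

theorem cexp_five_pi_div_six_mul_I :
    cexp ((5 * π / 6 : ℝ) * I) = (-(√3 / 2) : ℝ) + (1 / 2 : ℝ) * I := by
  refine cexp_mul_I_of_cos_sin ?_ ?_ <;> rw [show 5 * π / 6 = π - π / 6 by ring]
  exacts [by rw [cos_pi_sub, cos_pi_div_six], by rw [sin_pi_sub, sin_pi_div_six]]

theorem cexp_neg_five_pi_div_six_mul_I :
    cexp ((-(5 * π / 6) : ℝ) * I) = (-(√3 / 2) : ℝ) + (-(1 / 2) : ℝ) * I := by
  refine cexp_mul_I_of_cos_sin ?_ ?_ <;> rw [show 5 * π / 6 = π - π / 6 by ring]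
  exacts [by rw [cos_neg, cos_pi_sub, cos_pi_div_six], by rw [sin_neg, sin_pi_sub, sin_pi_div_six]]

theorem cexp_two_pi_div_three_mul_I :
    cexp ((2 * π / 3 : ℝ) * I) = (-(1 / 2) : ℝ) + (√3 / 2 : ℝ) * I := by
  refine cexp_mul_I_of_cos_sin ?_ ?_ <;> rw [show 2 * π / 3 = π - π / 3 by ring]
  exacts [by rw [cos_pi_sub, cos_pi_div_three], by rw [sin_pi_sub, sin_pi_div_three]]

/-- `d` is the unit vector from the centre of the unit equilateral triangle `v v' v''`,
labelled counterclockwise, towards `v`. -/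
def IsTriangleFrame (v v' v'' d : ℂ) : Prop :=
  ‖d‖ = 1 ∧ v' = v + d * cexp ((5 * π / 6 : ℝ) * I) ∧ v'' = v + d * cexp ((-(5 * π / 6) : ℝ) * I)

noncomputable def frameAngle (v d z : ℂ) : ℝ := arg ((z - v) / d)

section Frame

variable {v v' v'' d d' z w : ℂ}

theorem dist_add_mul_add_mul (hd : ‖d‖ = 1) (a b : ℂ) :
    dist (v + d * a) (v + d * b) = ‖a - b‖ := by
  rw [dist_eq_norm, add_sub_add_left_eq_sub, ← mul_sub, norm_mul, hd, one_mul]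

theorem eq_add_mul_cexp_frameAngle (hd : ‖d‖ = 1) (hz : dist z v = 1) :
    z = v + d * cexp (frameAngle v d z * I) := by
  have hd₀ : d ≠ 0 := norm_ne_zero_iff.1 (by rw [hd]; exact one_ne_zero)
  have h := Complex.norm_mul_exp_arg_mul_I ((z - v) / d)
  rw [norm_div, ← dist_eq_norm, hz, hd, div_one, Complex.ofReal_one, one_mul] at h
  rw [frameAngle, h, mul_div_cancel₀ _ hd₀, add_sub_cancel]

theorem frameAngle_mem_Ioc (v d z : ℂ) : frameAngle v d z ∈ Set.Ioc (-π) π :=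
  ⟨Complex.neg_pi_lt_arg _, Complex.arg_le_pi _⟩

theorem dist_eq_norm_cexp_sub (hd : ‖d‖ = 1) (hz : dist z v = 1) (hw : dist w v = 1) :
    dist z w = ‖cexp (frameAngle v d z * I) - cexp (frameAngle v d w * I)‖ := by
  conv_lhs => rw [eq_add_mul_cexp_frameAngle hd hz, eq_add_mul_cexp_frameAngle hd hw]
  exact dist_add_mul_add_mul hd _ _

theorem frameAngle_add_pi_div_three_le (hd : ‖d‖ = 1) (hz : dist z v = 1) (hw : dist w v = 1)
    (hz' : |frameAngle v d z| < π / 2) (hw' : |frameAngle v d w| < π / 2)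
    (hlt : frameAngle v d z < frameAngle v d w) (h : 1 ≤ dist z w) :
    frameAngle v d z + π / 3 ≤ frameAngle v d w := by
  rw [dist_eq_norm_cexp_sub hd hz hw] at h
  have := pi_div_three_le_abs_sub (abs_le.2 ⟨by linarith [abs_lt.1 hz', abs_lt.1 hw'],
    by linarith [abs_lt.1 hz', abs_lt.1 hw']⟩) h
  rw [abs_sub_comm, abs_of_pos (sub_pos.2 hlt)] at this
  linarith

theorem dist_eq_one_of_frameAngle_eq (hd : ‖d‖ = 1) (hz : dist z v = 1) (hw : dist w v = 1)
    (h : frameAngle v d w = frameAngle v d z + π / 3) : dist z w = 1 := by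
  rw [dist_eq_norm_cexp_sub hd hz hw]
  exact norm_cexp_sub_cexp_eq_one
    (by rw [h, sub_add_cancel_left, abs_neg, abs_of_pos (by positivity)])

namespace IsTriangleFrame

theorem rotate (hF : IsTriangleFrame v v' v'' d) :
    IsTriangleFrame v' v'' v (d * cexp ((2 * π / 3 : ℝ) * I)) := by
  obtain ⟨hd, rfl, rfl⟩ := hF
  have h3 : ((√3 : ℝ) : ℂ) ^ 2 = 3 := by
    rw [← Complex.ofReal_pow, sq_sqrt (by norm_num)]; norm_num
  refine ⟨by rw [norm_mul, hd, Complex.norm_exp_ofReal_mul_I, one_mul], ?_, ?_⟩ <;>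
    rw [cexp_five_pi_div_six_mul_I, cexp_neg_five_pi_div_six_mul_I,
      cexp_two_pi_div_three_mul_I] <;>
    push_cast
  · linear_combination (-d * √3 / 4) * Complex.I_sq + (d * I / 4) * h3
  · linear_combination (d * √3 / 4) * Complex.I_sq + (d * I / 4) * h3

theorem abs_frameAngle_lt (hF : IsTriangleFrame v v' v'' d) (hz : dist z v = 1)
    (h' : 1 < dist z v') (h'' : 1 < dist z v'') : |frameAngle v d z| < π / 2 := by
  obtain ⟨hd, rfl, rfl⟩ := hF
  rw [eq_add_mul_cexp_frameAngle hd hz, dist_add_mul_add_mul hd] at h' h''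
  exact abs_lt_pi_div_two_of_one_lt_norm (frameAngle_mem_Ioc v d z) h' h''

theorem dist_eq_norm_bridge (hF : IsTriangleFrame v v' v'' d)
    (hF' : IsTriangleFrame v' v'' v d') (hz : dist z v = 1) (hw : dist w v' = 1) :
    dist z w = ‖cexp (frameAngle v d z * I) - cexp ((5 * π / 6 : ℝ) * I)
      - cexp ((frameAngle v' d' w + 2 * π / 3 : ℝ) * I)‖ := by
  obtain ⟨hd, hv', -⟩ := hF
  obtain ⟨hd', -, hv⟩ := hF'
  have hc : cexp ((-(5 * π / 6) : ℝ) * I) * cexp ((5 * π / 6 : ℝ) * I) = 1 := by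
    rw [← Complex.exp_add]; push_cast; simp
  have hcc : cexp ((5 * π / 6 : ℝ) * I) * cexp ((5 * π / 6 : ℝ) * I)
      = -cexp ((2 * π / 3 : ℝ) * I) := by
    rw [← Complex.exp_add, ← Complex.exp_add_pi_mul_I]; push_cast; ring_nf
  -- the frame at `v'` is the frame at `v` turned by `2π/3`
  have hd'eq : d' = d * cexp ((2 * π / 3 : ℝ) * I) := by
    linear_combination (-cexp ((5 * π / 6 : ℝ) * I)) * (hv.trans (congrArg (· + _) hv'))
      - d' * hc - d * hcc
  have hw' : w = v + d * (cexp ((5 * π / 6 : ℝ) * I)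
      + cexp ((frameAngle v' d' w + 2 * π / 3 : ℝ) * I)) := by
    conv_lhs => rw [eq_add_mul_cexp_frameAngle hd' hw]
    subst hd'eq hv'
    rw [Complex.ofReal_add, add_mul, Complex.exp_add]; ring
  conv_lhs => rw [eq_add_mul_cexp_frameAngle hd hz, hw']
  rw [dist_add_mul_add_mul hd, sub_sub]

theorem frameAngle_sub_le (hF : IsTriangleFrame v v' v'' d)
    (hF' : IsTriangleFrame v' v'' v d') (hz : dist z v = 1) (hw : dist w v' = 1)
    (hz' : |frameAngle v d z| < π / 2) (hw' : |frameAngle v' d' w| < π / 2)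
    (h : 1 ≤ dist z w) : frameAngle v d z - frameAngle v' d' w ≤ 2 * π / 3 :=
  sub_le_of_one_le_norm_bridge hz' hw' (dist_eq_norm_bridge hF hF' hz hw ▸ h)

theorem dist_eq_one_of_frameAngle_sub_eq (hF : IsTriangleFrame v v' v'' d)
    (hF' : IsTriangleFrame v' v'' v d') (hz : dist z v = 1) (hw : dist w v' = 1)
    (h : frameAngle v d z - frameAngle v' d' w = 2 * π / 3) : dist z w = 1 :=
  (dist_eq_norm_bridge hF hF' hz hw).trans (norm_bridge_eq_one h)

theorem dist_eq_one (hF : IsTriangleFrame v v' v'' d) :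
    dist v v' = 1 ∧ dist v v'' = 1 ∧ dist v' v'' = 1 := by
  obtain ⟨hd, rfl, rfl⟩ := hF
  refine ⟨?_, ?_, ?_⟩
  · rw [dist_self_add_right, norm_mul, hd, Complex.norm_exp_ofReal_mul_I, one_mul]
  · rw [dist_self_add_right, norm_mul, hd, Complex.norm_exp_ofReal_mul_I, one_mul]
  · rw [dist_add_mul_add_mul hd, cexp_five_pi_div_six_mul_I, cexp_neg_five_pi_div_six_mul_I]
    convert Complex.norm_I using 2
    push_cast; ring

end IsTriangleFrame

theorem isTriangleFrame_of_dist {x y z : ℂ} (hxy : dist x y = 1) (hxz : dist x z = 1)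
    (hyz : dist y z = 1) (him : 0 ≤ ((z - x) / (y - x)).im) :
    IsTriangleFrame x y z ((y - x) * cexp ((-(5 * π / 6) : ℝ) * I)) := by
  have hyx : y - x ≠ 0 :=
    sub_ne_zero.2 (dist_ne_zero.1 (by rw [dist_comm, hxy]; exact one_ne_zero))
  have hnorm : ‖y - x‖ = 1 := by rw [← dist_eq_norm, dist_comm, hxy]
  set u := (z - x) / (y - x) with hu
  have hu₁ : Complex.normSq u = 1 := by
    rw [Complex.normSq_eq_norm_sq, hu, norm_div, hnorm, ← dist_eq_norm, dist_comm, hxz]; norm_num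
  have hu₂ : Complex.normSq (u - 1) = 1 := by
    rw [Complex.normSq_eq_norm_sq, show u - 1 = (z - y) / (y - x) by rw [hu]; field_simp; ring,
      norm_div, hnorm, ← dist_eq_norm, dist_comm, hyz]; norm_num
  rw [Complex.normSq_apply] at hu₁ hu₂
  simp only [Complex.sub_re, Complex.sub_im, Complex.one_re, Complex.one_im, sub_zero] at hu₂
  have hre : u.re = 1 / 2 := by nlinarith
  have him' : u.im = √3 / 2 := by
    rw [← pow_left_inj₀ him (by positivity) two_ne_zero, div_pow, sq_sqrt (by norm_num)]
    nlinarith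
  have hu' : u = (1 / 2 : ℝ) + (√3 / 2 : ℝ) * I := by
    apply Complex.ext <;> simp [hre, him']
  have h3 : ((√3 : ℝ) : ℂ) ^ 2 = 3 := by
    rw [← Complex.ofReal_pow, sq_sqrt (by norm_num)]; norm_num
  have hz : z = x + (y - x) * u := by rw [hu, mul_div_cancel₀ _ hyx, add_sub_cancel]
  refine ⟨by rw [norm_mul, hnorm, Complex.norm_exp_ofReal_mul_I, one_mul], ?_, ?_⟩
  · rw [mul_assoc, ← Complex.exp_add]; push_cast; simp
  · rw [hz, hu', cexp_neg_five_pi_div_six_mul_I]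
    push_cast
    linear_combination (x - y) / 4 * Complex.I_sq + (x - y) / 4 * h3

end Frame

theorem exists_eq_triple_of_injOn {α β : Type*} [LinearOrder β] {s : Set α} {f : α → β}
    (hs : s.ncard = 3) (hf : s.InjOn f) : ∃ a b c, s = {a, b, c} ∧ f a < f b ∧ f b < f c := by
  obtain ⟨x, y, z, hxy, hxz, hyz, rfl⟩ := Set.ncard_eq_three.1 hs
  have hxy' : f x ≠ f y := hf.ne (by simp) (by simp) hxy
  have hxz' : f x ≠ f z := hf.ne (by simp) (by simp) hxz
  have hyz' : f y ≠ f z := hf.ne (by simp) (by simp) hyz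
  rcases hxy'.lt_or_gt with h₁ | h₁ <;> rcases hxz'.lt_or_gt with h₂ | h₂ <;>
    rcases hyz'.lt_or_gt with h₃ | h₃
  · exact ⟨x, y, z, rfl, h₁, h₃⟩
  · exact ⟨x, z, y, by ext; simp only [Set.mem_insert_iff, Set.mem_singleton_iff]; tauto, h₂, h₃⟩
  · exact absurd (h₁.trans h₃) h₂.not_gt
  · exact ⟨z, x, y, by ext; simp only [Set.mem_insert_iff, Set.mem_singleton_iff]; tauto, h₂, h₁⟩
  · exact ⟨y, x, z, by ext; simp only [Set.mem_insert_iff, Set.mem_singleton_iff]; tauto, h₁, h₂⟩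
  · exact absurd (h₂.trans h₃) h₁.not_gt
  · exact ⟨y, z, x, by ext; simp only [Set.mem_insert_iff, Set.mem_singleton_iff]; tauto, h₃, h₂⟩
  · exact ⟨z, y, x, by ext; simp only [Set.mem_insert_iff, Set.mem_singleton_iff]; tauto, h₃, h₁⟩

open ComplexConjugate in
theorem exists_isometry_isTriangleFrame {X Y Z : Pt} (hXY : dist X Y = 1) (hXZ : dist X Z = 1)
    (hYZ : dist Y Z = 1) : ∃ φ : Pt → ℂ, Isometry φ ∧ ∃ d, IsTriangleFrame (φ X) (φ Y) (φ Z) d := by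
  have key (φ : Pt → ℂ) (hφ : Isometry φ) (him : 0 ≤ ((φ Z - φ X) / (φ Y - φ X)).im) :
      ∃ d, IsTriangleFrame (φ X) (φ Y) (φ Z) d :=
    ⟨_, isTriangleFrame_of_dist (by rwa [hφ.dist_eq]) (by rwa [hφ.dist_eq])
      (by rwa [hφ.dist_eq]) him⟩
  let e : Pt ≃ₗᵢ[ℝ] ℂ := Complex.orthonormalBasisOneI.repr.symm
  have hconj : Isometry (conj ∘ e) := Complex.isometry_conj.comp e.isometry
  rcases le_total 0 ((e Z - e X) / (e Y - e X)).im with h | h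
  · exact ⟨e, e.isometry, key e e.isometry h⟩
  · refine ⟨conj ∘ e, hconj, key _ hconj ?_⟩
    simpa [← map_sub, ← map_div₀] using h

def unitNeighborSet (P : Finset Pt) (A : Pt) : Set Pt := {q | q ∈ P ∧ dist A q = 1}

instance (P : Finset Pt) (A : Pt) : Finite (unitNeighborSet P A) :=
  (P.finite_toSet.subset fun _ h => h.1).to_subtype

structure IsFan (P : Finset Pt) (φ : Pt → ℂ) (V U W : Pt) (d : ℂ) (a₁ a₂ a₃ : Pt) : Prop where
  eq : unitNeighborSet P V \ {U, W} = {a₁, a₂, a₃}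
  abs_lt : ∀ a ∈ unitNeighborSet P V \ {U, W}, |frameAngle (φ V) d (φ a)| < π / 2
  le₁₂ : frameAngle (φ V) d (φ a₁) + π / 3 ≤ frameAngle (φ V) d (φ a₂)
  le₂₃ : frameAngle (φ V) d (φ a₂) + π / 3 ≤ frameAngle (φ V) d (φ a₃)

section Fan

variable {P : Finset Pt} {φ : Pt → ℂ} {V U W : Pt} {d : ℂ}

theorem dist_eq_one_of_mem_unitNeighborSet (hφ : Isometry φ) {a : Pt}
    (ha : a ∈ unitNeighborSet P V) : dist (φ a) (φ V) = 1 := by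
  rw [hφ.dist_eq, dist_comm]; exact ha.2

theorem exists_isFan (hsep : ∀ p ∈ P, ∀ q ∈ P, p ≠ q → 1 ≤ dist p q) (hφ : Isometry φ)
    (hF : IsTriangleFrame (φ V) (φ U) (φ W) d) (hU : U ∈ P) (hW : W ∈ P) (hdeg : deg P V = 5)
    (hdisj : Disjoint (unitNeighborSet P V \ {U, W}) (unitNeighborSet P U ∪ unitNeighborSet P W)) :
    ∃ a₁ a₂ a₃, IsFan P φ V U W d a₁ a₂ a₃ := by
  set S := unitNeighborSet P V \ {U, W}
  set θ : Pt → ℝ := fun a => frameAngle (φ V) d (φ a)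
  obtain ⟨hVU, hVW, hUW⟩ := hF.dist_eq_one
  rw [hφ.dist_eq] at hVU hVW hUW
  have hdist (a : Pt) (ha : a ∈ S) := dist_eq_one_of_mem_unitNeighborSet hφ ha.1
  have hfar (a : Pt) (ha : a ∈ S) (B : Pt) (hB : B ∈ P) (haB : a ≠ B)
      (hn : a ∉ unitNeighborSet P B) : 1 < dist (φ a) (φ B) := by
    rw [hφ.dist_eq]
    exact (hsep a ha.1.1 B hB haB).lt_of_ne fun h => hn ⟨ha.1.1, by rw [dist_comm, ← h]⟩
  have habs (a : Pt) (ha : a ∈ S) : |θ a| < π / 2 := by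
    have hn := Set.disjoint_left.1 hdisj ha
    refine hF.abs_frameAngle_lt (hdist a ha) (hfar a ha U hU ?_ ?_) (hfar a ha W hW ?_ ?_)
    exacts [fun h => ha.2 (by simp [h]), fun h => hn (Or.inl h), fun h => ha.2 (by simp [h]),
      fun h => hn (Or.inr h)]
  have hinj : S.InjOn θ := fun a ha b hb h => hφ.injective <| by
    rw [eq_add_mul_cexp_frameAngle hF.1 (hdist a ha), eq_add_mul_cexp_frameAngle hF.1 (hdist b hb)]
    exact congrArg (fun t : ℝ => φ V + d * cexp (t * I)) h
  have hcard : S.ncard = 3 := by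
    rw [Set.ncard_sdiff (Set.pair_subset (show U ∈ unitNeighborSet P V from ⟨hU, hVU⟩) ⟨hW, hVW⟩),
      Set.ncard_pair (fun h => by simp [h] at hUW)]
    rw [show (unitNeighborSet P V).ncard = 5 from hdeg]
  obtain ⟨a₁, a₂, a₃, hS, h₁₂, h₂₃⟩ := exists_eq_triple_of_injOn hcard hinj
  have hgap (a b : Pt) (ha : a ∈ S) (hb : b ∈ S) (hlt : θ a < θ b) : θ a + π / 3 ≤ θ b :=
    frameAngle_add_pi_div_three_le hF.1 (hdist a ha) (hdist b hb) (habs a ha) (habs b hb) hlt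
      (by rw [hφ.dist_eq]; exact hsep a ha.1.1 b hb.1.1 (ne_of_apply_ne θ hlt.ne))
  exact ⟨a₁, a₂, a₃, hS, habs, hgap _ _ (hS ▸ by simp) (hS ▸ by simp) h₁₂,
    hgap _ _ (hS ▸ by simp) (hS ▸ by simp) h₂₃⟩

end Fan

namespace IsFan

variable {P : Finset Pt} {φ : Pt → ℂ} {V U W : Pt} {d d' : ℂ} {a₁ a₂ a₃ b₁ b₂ b₃ : Pt}

theorem mem₁ (hA : IsFan P φ V U W d a₁ a₂ a₃) : a₁ ∈ unitNeighborSet P V \ {U, W} :=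
  hA.eq ▸ by simp

theorem mem₂ (hA : IsFan P φ V U W d a₁ a₂ a₃) : a₂ ∈ unitNeighborSet P V \ {U, W} :=
  hA.eq ▸ by simp

theorem mem₃ (hA : IsFan P φ V U W d a₁ a₂ a₃) : a₃ ∈ unitNeighborSet P V \ {U, W} :=
  hA.eq ▸ by simp

theorem ncard_eq (hA : IsFan P φ V U W d a₁ a₂ a₃) :
    (unitNeighborSet P V \ {U, W}).ncard = 3 := by
  have h₁₂ := hA.le₁₂
  have h₂₃ := hA.le₂₃
  have hπ := pi_pos
  rw [hA.eq, Set.ncard_eq_three]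
  refine ⟨a₁, a₂, a₃, ?_, ?_, ?_, rfl⟩ <;> rintro rfl <;> linarith

theorem dist₁₂_eq_one (hA : IsFan P φ V U W d a₁ a₂ a₃) (hφ : Isometry φ) (hd : ‖d‖ = 1)
    (h : frameAngle (φ V) d (φ a₂) = frameAngle (φ V) d (φ a₁) + π / 3) : dist a₁ a₂ = 1 := by
  rw [← hφ.dist_eq]
  exact dist_eq_one_of_frameAngle_eq hd (dist_eq_one_of_mem_unitNeighborSet hφ hA.mem₁.1)
    (dist_eq_one_of_mem_unitNeighborSet hφ hA.mem₂.1) h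

theorem dist₂₃_eq_one (hA : IsFan P φ V U W d a₁ a₂ a₃) (hφ : Isometry φ) (hd : ‖d‖ = 1)
    (h : frameAngle (φ V) d (φ a₃) = frameAngle (φ V) d (φ a₂) + π / 3) : dist a₂ a₃ = 1 := by
  rw [← hφ.dist_eq]
  exact dist_eq_one_of_frameAngle_eq hd (dist_eq_one_of_mem_unitNeighborSet hφ hA.mem₂.1)
    (dist_eq_one_of_mem_unitNeighborSet hφ hA.mem₃.1) h

theorem frameAngle_sub_next_le (hA : IsFan P φ V U W d a₁ a₂ a₃) (hB : IsFan P φ U W V d' b₁ b₂ b₃)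
    (hF : IsTriangleFrame (φ V) (φ U) (φ W) d) (hF' : IsTriangleFrame (φ U) (φ W) (φ V) d')
    (hφ : Isometry φ) (hsep : ∀ p ∈ P, ∀ q ∈ P, p ≠ q → 1 ≤ dist p q)
    (hdisj : Disjoint (unitNeighborSet P V \ {U, W}) (unitNeighborSet P U ∪ unitNeighborSet P W)) :
    frameAngle (φ V) d (φ a₃) - frameAngle (φ U) d' (φ b₁) ≤ 2 * π / 3 := by
  have hne : a₃ ≠ b₁ := hdisj.ne_of_mem hA.mem₃ (Or.inl hB.mem₁.1)
  refine hF.frameAngle_sub_le hF' (dist_eq_one_of_mem_unitNeighborSet hφ hA.mem₃.1)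
    (dist_eq_one_of_mem_unitNeighborSet hφ hB.mem₁.1) (hA.abs_lt _ hA.mem₃) (hB.abs_lt _ hB.mem₁) ?_
  rw [hφ.dist_eq]
  exact hsep _ hA.mem₃.1.1 _ hB.mem₁.1.1 hne

theorem dist_next_eq_one (hA : IsFan P φ V U W d a₁ a₂ a₃) (hB : IsFan P φ U W V d' b₁ b₂ b₃)
    (hF : IsTriangleFrame (φ V) (φ U) (φ W) d) (hF' : IsTriangleFrame (φ U) (φ W) (φ V) d')
    (hφ : Isometry φ) (h : frameAngle (φ V) d (φ a₃) - frameAngle (φ U) d' (φ b₁) = 2 * π / 3) :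
    dist a₃ b₁ = 1 := by
  rw [← hφ.dist_eq]
  exact hF.dist_eq_one_of_frameAngle_sub_eq hF' (dist_eq_one_of_mem_unitNeighborSet hφ hA.mem₃.1)
    (dist_eq_one_of_mem_unitNeighborSet hφ hB.mem₁.1) h

theorem ncard_union {X Y Z : Pt} {d'' : ℂ} {c₁ c₂ c₃ : Pt} (hA : IsFan P φ X Y Z d a₁ a₂ a₃)
    (hB : IsFan P φ Y Z X d' b₁ b₂ b₃) (hC : IsFan P φ Z X Y d'' c₁ c₂ c₃)
    (hsX : Disjoint (unitNeighborSet P X \ {Y, Z}) (unitNeighborSet P Y ∪ unitNeighborSet P Z))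
    (hsY : Disjoint (unitNeighborSet P Y \ {Z, X}) (unitNeighborSet P Z ∪ unitNeighborSet P X)) :
    ({a₁, a₂, a₃} ∪ {b₁, b₂, b₃} ∪ {c₁, c₂, c₃} : Set Pt).ncard = 9 := by
  rw [← hA.eq, ← hB.eq, ← hC.eq, Set.ncard_union_eq, Set.ncard_union_eq, hA.ncard_eq,
    hB.ncard_eq, hC.ncard_eq]
  · exact hsX.mono_right (Set.sdiff_subset.trans Set.subset_union_left)
  · exact Set.disjoint_union_left.2 ⟨hsX.mono_right (Set.sdiff_subset.trans Set.subset_union_right),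
      hsY.mono_right (Set.sdiff_subset.trans Set.subset_union_left)⟩

end IsFan

theorem exists_cycle_of_ncard_eq {α : Type*} {R : α → α → Prop}
    {x₁ x₂ x₃ x₄ x₅ x₆ x₇ x₈ x₉ : α}
    (hcard : ({x₁, x₂, x₃} ∪ {x₄, x₅, x₆} ∪ {x₇, x₈, x₉} : Set α).ncard = 9)
    (h₁ : R x₁ x₂) (h₂ : R x₂ x₃) (h₃ : R x₃ x₄) (h₄ : R x₄ x₅) (h₅ : R x₅ x₆) (h₆ : R x₆ x₇)
    (h₇ : R x₇ x₈) (h₈ : R x₈ x₉) (h₉ : R x₉ x₁) :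
    ∃ w : Fin 9 → α, Function.Injective w ∧
      Set.range w = {x₁, x₂, x₃} ∪ {x₄, x₅, x₆} ∪ {x₇, x₈, x₉} ∧ ∀ i, R (w i) (w (i + 1)) := by
  have hrange : Set.range ![x₁, x₂, x₃, x₄, x₅, x₆, x₇, x₈, x₉]
      = {x₁, x₂, x₃} ∪ {x₄, x₅, x₆} ∪ {x₇, x₈, x₉} := by
    simp only [Matrix.range_cons, Matrix.range_empty, Set.singleton_union, Set.union_empty,
      Set.insert_union]
  refine ⟨_, ?_, hrange, fun i => by fin_cases i <;> assumption⟩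
  refine Set.injOn_univ.1 (Set.injOn_of_ncard_image_eq ?_)
  rw [Set.image_univ, hrange, hcard, Set.ncard_univ, Nat.card_eq_fintype_card, Fintype.card_fin]

theorem setOf_eq_union_unitNeighborSet (P : Finset Pt) (X Y Z : Pt) :
    {v : Pt | v ∈ P ∧ v ∉ ({X, Y, Z} : Set Pt) ∧ (dist v X = 1 ∨ dist v Y = 1 ∨ dist v Z = 1)} =
      (unitNeighborSet P X \ {Y, Z}) ∪ (unitNeighborSet P Y \ {Z, X}) ∪
        (unitNeighborSet P Z \ {X, Y}) := by
  ext v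
  simp only [unitNeighborSet, Set.mem_ofPred_eq, Set.mem_union, Set.mem_sdiff, Set.mem_insert_iff,
    Set.mem_singleton_iff, dist_comm v]
  constructor
  · aesop
  · rintro ((⟨⟨hP, h⟩, hne⟩ | ⟨⟨hP, h⟩, hne⟩) | ⟨⟨hP, h⟩, hne⟩) <;>
      refine ⟨hP, ?_, by tauto⟩ <;> rintro (rfl | rfl | rfl) <;> simp_all

theorem disjoint_unitNeighborSet_of_not_exists {P : Finset Pt} {X Y Z : Pt}
    (hL : ¬∃ W ∈ P, W ∉ ({X, Y, Z} : Set Pt) ∧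
      ((dist W X = 1 ∧ dist W Y = 1) ∨ (dist W X = 1 ∧ dist W Z = 1) ∨
        (dist W Y = 1 ∧ dist W Z = 1))) :
    Disjoint (unitNeighborSet P X \ {Y, Z}) (unitNeighborSet P Y ∪ unitNeighborSet P Z) ∧
    Disjoint (unitNeighborSet P Y \ {Z, X}) (unitNeighborSet P Z ∪ unitNeighborSet P X) ∧
    Disjoint (unitNeighborSet P Z \ {X, Y}) (unitNeighborSet P X ∪ unitNeighborSet P Y) := by
  refine ⟨?_, ?_, ?_⟩ <;> refine Set.disjoint_left.2 ?_ <;>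
    rintro p ⟨⟨hp, hA⟩, hne⟩ (⟨-, hB⟩ | ⟨-, hB⟩) <;> refine hL ⟨p, hp, ?_, ?_⟩ <;>
    rw [dist_comm] at hA hB
  all_goals first | tauto | (rintro (rfl | rfl | rfl) <;> simp_all)

/-- Around a unit triangle on vertices of degree 5 in a penny configuration in
general position, either two of the three vertices share a common neighbor other
than the third vertex, or the nine remaining neighbors form a 9-cycle of unit
distances (a Möbius loop). -/
theorem mobius_loop (P : Finset Pt) (hP : PennyGP P) (X Y Z : Pt)
    (hX : X ∈ P) (hY : Y ∈ P) (hZ : Z ∈ P)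
    (hXY : dist X Y = 1) (hXZ : dist X Z = 1) (hYZ : dist Y Z = 1)
    (hdX : deg P X = 5) (hdY : deg P Y = 5) (hdZ : deg P Z = 5) :
    (∃ W ∈ P, W ∉ ({X, Y, Z} : Set Pt) ∧
      ((dist W X = 1 ∧ dist W Y = 1) ∨ (dist W X = 1 ∧ dist W Z = 1) ∨
        (dist W Y = 1 ∧ dist W Z = 1))) ∨
    (∃ w : Fin 9 → Pt, Function.Injective w ∧
      Set.range w =
        {v : Pt | v ∈ P ∧ v ∉ ({X, Y, Z} : Set Pt) ∧
          (dist v X = 1 ∨ dist v Y = 1 ∨ dist v Z = 1)} ∧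
      ∀ i : Fin 9, dist (w i) (w (i + 1)) = 1) := by
  refine or_iff_not_imp_left.2 fun hL => ?_
  obtain ⟨hsX, hsY, hsZ⟩ := disjoint_unitNeighborSet_of_not_exists hL
  obtain ⟨φ, hφ, d, hF⟩ := exists_isometry_isTriangleFrame hXY hXZ hYZ
  have hF₁ := hF.rotate
  have hF₂ := hF₁.rotate
  obtain ⟨a₁, a₂, a₃, hA⟩ := exists_isFan hP.1 hφ hF hY hZ hdX hsX
  obtain ⟨b₁, b₂, b₃, hB⟩ := exists_isFan hP.1 hφ hF₁ hZ hX hdY hsY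
  obtain ⟨c₁, c₂, c₃, hC⟩ := exists_isFan hP.1 hφ hF₂ hX hY hdZ hsZ
  have hAB := hA.frameAngle_sub_next_le hB hF hF₁ hφ hP.1 hsX
  have hBC := hB.frameAngle_sub_next_le hC hF₁ hF₂ hφ hP.1 hsY
  have hCA := hC.frameAngle_sub_next_le hA hF₂ hF hφ hP.1 hsZ
  have := hA.le₁₂; have := hA.le₂₃; have := hB.le₁₂; have := hB.le₂₃
  have := hC.le₁₂; have := hC.le₂₃
  rw [setOf_eq_union_unitNeighborSet, hA.eq, hB.eq, hC.eq]
  -- around the triangle the six gap bounds and the three bounds between consecutive vertices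
  -- telescope, so each of them is tight
  exact exists_cycle_of_ncard_eq (R := fun p q => dist p q = 1) (hA.ncard_union hB hC hsX hsY)
    (hA.dist₁₂_eq_one hφ hF.1 (by linarith)) (hA.dist₂₃_eq_one hφ hF.1 (by linarith))
    (hA.dist_next_eq_one hB hF hF₁ hφ (by linarith)) (hB.dist₁₂_eq_one hφ hF₁.1 (by linarith))
    (hB.dist₂₃_eq_one hφ hF₁.1 (by linarith)) (hB.dist_next_eq_one hC hF₁ hF₂ hφ (by linarith))
    (hC.dist₁₂_eq_one hφ hF₂.1 (by linarith)) (hC.dist₂₃_eq_one hφ hF₂.1 (by linarith))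
    (hC.dist_next_eq_one hA hF₂ hF hφ (by linarith))
end

section
/- Let P be a penny configuration in general position and let A ∈ P have degree 5 such that every unit-neighbor of A also has degree 5. Then A belongs to a kernel: there exist three unit-neighbors X, Y, Z of A, each of degree 5, with dist(A,X) = dist(A,Y) = dist(A,Z) = 1, dist(X,Y) = 1, and dist(Y,Z) = 1 (so that {A, X, Y, Z} forms a kernel with the five unit distances AX, XY, YZ, ZA, AY). -/
open Real EuclideanGeometry

/-- A kernel: four distinct points of `P`, each of degree 5, with the five unit
distances `LU`, `UR`, `RD`, `DL`, `LR`. -/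
def IsKernel (P : Finset Pt) (L U R D : Pt) : Prop :=
  L ∈ P ∧ U ∈ P ∧ R ∈ P ∧ D ∈ P ∧
  List.Pairwise (· ≠ ·) [L, U, R, D] ∧
  deg P L = 5 ∧ deg P U = 5 ∧ deg P R = 5 ∧ deg P D = 5 ∧
  dist L U = 1 ∧ dist U R = 1 ∧ dist R D = 1 ∧ dist D L = 1 ∧ dist L R = 1

/-- A point belongs to a kernel if it is one of the four points of some kernel of `P`. -/
def InKernel (P : Finset Pt) (X : Pt) : Prop :=
  ∃ L U R D : Pt, IsKernel P L U R D ∧ X ∈ ({L, U, R, D} : Set Pt)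

/-!
Identify the plane with `ℂ` and list the five unit-neighbours of `A` counterclockwise; the angles
they subtend at `A` are at least `π / 3` and sum to `2π`. Let `B` be a neighbour whose two adjacent
angles `θ, θ'` both exceed `π / 3`. Each of the four other unit-neighbours of `B` lies on the unit
circle around `B` at distance at least `1` from `A` and from the two neighbours of `A` adjacent to
`B`, which confines it to an arc of angular width `θ + θ'` seen from `B`; four points pairwise
`π / 3` apart on that arc force `θ + θ' ≥ π`. Around the 5-cycle of angles with total `2π` this
leaves no room unless two consecutive angles equal `π / 3`, i.e. three consecutive neighbours
`X, Y, Z` of `A` have `XY = YZ = 1`.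
-/

open Complex (I arg)
open scoped Complex

lemma norm_exp_mul_I_sub_exp_mul_I_sq (s t : ℝ) :
    ‖cexp (s * I) - cexp (t * I)‖ ^ 2 = 2 - 2 * cos (s - t) := by
  rw [Complex.sq_norm, Complex.normSq_apply]
  simp [Complex.exp_ofReal_mul_I_re, Complex.exp_ofReal_mul_I_im, cos_sub]
  nlinarith [sin_sq_add_cos_sq s, sin_sq_add_cos_sq t]

lemma dist_add_add_mul_exp_mul_I_sq (a : ℂ) {u : ℂ} (hu : ‖u‖ = 1) (θ : ℝ) :
    dist (a + u) (a + u * cexp (θ * I)) ^ 2 = 2 - 2 * cos θ := by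
  have h := norm_exp_mul_I_sub_exp_mul_I_sq 0 θ
  rw [Complex.ofReal_zero, zero_mul, Complex.exp_zero, zero_sub, cos_neg] at h
  rw [Complex.dist_eq, add_sub_add_left_eq_sub, ← mul_one_sub, norm_mul, hu, one_mul, h]

lemma exp_arg_mul_I_of_norm_eq_one {z : ℂ} (hz : ‖z‖ = 1) : cexp (arg z * I) = z := by
  simpa [hz] using Complex.norm_mul_exp_arg_mul_I z

lemma dist_sq_eq_two_sub_two_mul_cos_arg_sub {z w : ℂ} (hz : ‖z‖ = 1) (hw : ‖w‖ = 1) :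
    dist z w ^ 2 = 2 - 2 * cos (arg z - arg w) := by
  rw [Complex.dist_eq, ← norm_exp_mul_I_sub_exp_mul_I_sq, exp_arg_mul_I_of_norm_eq_one hz,
    exp_arg_mul_I_of_norm_eq_one hw]

lemma pi_div_three_le_abs_of_cos_le_half {x : ℝ} (h : cos x ≤ 1 / 2) : π / 3 ≤ |x| := by
  by_contra! hx
  have := strictAntiOn_cos ⟨abs_nonneg x, by linarith [pi_pos]⟩
    ⟨by positivity, by linarith [pi_pos]⟩ hx
  rw [cos_abs, cos_pi_div_three] at this
  linarith

lemma pi_div_three_le_abs_arg_sub {z w : ℂ} (hz : ‖z‖ = 1) (hw : ‖w‖ = 1)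
    (h : 1 ≤ dist z w) : π / 3 ≤ |arg z - arg w| := by
  apply pi_div_three_le_abs_of_cos_le_half
  nlinarith [dist_sq_eq_two_sub_two_mul_cos_arg_sub hz hw]

lemma cos_lt_one_half_of_mem_Ioc {θ : ℝ} (hθ : θ ∈ Set.Ioc (π / 3) π) : cos θ < 1 / 2 := by
  rw [← cos_pi_div_three]
  exact strictAntiOn_cos ⟨by linarith [pi_pos], by linarith [pi_pos]⟩
    ⟨by linarith [hθ.1, pi_pos], hθ.2⟩ hθ.1

lemma one_lt_dist_add_add_mul_exp_mul_I (a : ℂ) {u : ℂ} (hu : ‖u‖ = 1) {θ : ℝ}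
    (hθ : cos θ < 1 / 2) : 1 < dist (a + u) (a + u * cexp (θ * I)) := by
  nlinarith [dist_add_add_mul_exp_mul_I_sq a hu θ,
    dist_nonneg (x := a + u) (y := a + u * cexp (θ * I))]

lemma sin_lt_sin_of_lt_of_lt_pi_sub {a x : ℝ} (ha₀ : 0 ≤ a) (ha : a ≤ π / 2) (h₁ : a < x)
    (h₂ : x < π - a) : sin a < sin x := by
  rcases le_or_gt x (π / 2) with hx | hx
  · exact strictMonoOn_sin ⟨by linarith, ha⟩ ⟨by linarith [pi_pos], hx⟩ h₁
  · rw [← sin_pi_sub x]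
    exact strictMonoOn_sin ⟨by linarith, ha⟩ ⟨by linarith, by linarith⟩ (by linarith)

lemma norm_exp_mul_I_add_one_sub_exp_mul_I_sq (x a : ℝ) :
    ‖cexp ((x + a : ℝ) * I) + 1 - cexp ((2 * a : ℝ) * I)‖ ^ 2
      = 1 + 4 * sin a * (sin a - sin x) := by
  rw [Complex.sq_norm, Complex.normSq_apply]
  simp only [Complex.add_re, Complex.sub_re, Complex.one_re, Complex.add_im, Complex.sub_im,
    Complex.one_im, Complex.exp_ofReal_mul_I_re, Complex.exp_ofReal_mul_I_im]
  rw [cos_add, sin_add, cos_two_mul, sin_two_mul]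
  linear_combination (sin_sq_add_cos_sq x) * (sin a ^ 2 + cos a ^ 2)
    + (sin_sq_add_cos_sq a) * (4 * cos a ^ 2 - 4 * cos x * cos a - 3)

lemma arg_ne_pi_of_ne_neg_one {z : ℂ} (hz : ‖z‖ = 1) (hz₁ : z ≠ -1) : arg z ≠ π := fun h ↦
  hz₁ <| by rw [← exp_arg_mul_I_of_norm_eq_one hz, h, Complex.exp_pi_mul_I]

lemma arg_le_of_one_le_dist_exp_mul_I_sub_one {z : ℂ} {θ : ℝ} (hz : ‖z‖ = 1) (hz₁ : z ≠ -1)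
    (hθ : θ ∈ Set.Ioc 0 π) (h : 1 ≤ dist z (cexp (θ * I) - 1)) : arg z ≤ θ := by
  by_contra! hlt
  have harg : arg z < π := (Complex.arg_le_pi z).lt_of_ne (arg_ne_pi_of_ne_neg_one hz hz₁)
  -- write `arg z = x + θ / 2`: then `θ < arg z < π` gives `sin (θ / 2) < sin x`
  have hsq := norm_exp_mul_I_add_one_sub_exp_mul_I_sq (arg z - θ / 2) (θ / 2)
  rw [sub_add_cancel, mul_div_cancel₀ θ two_ne_zero, exp_arg_mul_I_of_norm_eq_one hz] at hsq
  rw [Complex.dist_eq, sub_sub_eq_add_sub] at h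
  have hsin₀ : 0 < sin (θ / 2) :=
    sin_pos_of_pos_of_lt_pi (by linarith [hθ.1]) (by linarith [hθ.2, pi_pos])
  have hsin := sin_lt_sin_of_lt_of_lt_pi_sub (a := θ / 2) (x := arg z - θ / 2)
    (by linarith [hθ.1]) (by linarith [hθ.2]) (by linarith) (by linarith)
  nlinarith [mul_pos hsin₀ (sub_pos.2 hsin)]

lemma neg_le_arg_of_one_le_dist_exp_neg_mul_I_sub_one {z : ℂ} {θ : ℝ} (hz : ‖z‖ = 1)
    (hz₁ : z ≠ -1) (hθ : θ ∈ Set.Ioc 0 π) (h : 1 ≤ dist z (cexp (-θ * I) - 1)) :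
    -θ ≤ arg z := by
  have hconj := arg_le_of_one_le_dist_exp_mul_I_sub_one (z := starRingEnd ℂ z) (θ := θ)
    (by rwa [Complex.norm_conj]) (fun h ↦ hz₁ <| by simpa using congrArg (starRingEnd ℂ) h) hθ
    (by rwa [← Complex.dist_conj_conj, map_sub, map_one, ← Complex.exp_conj, map_mul,
      Complex.conj_ofReal, Complex.conj_I, Complex.conj_conj, mul_neg, ← neg_mul])
  rw [Complex.arg_conj, if_neg (arg_ne_pi_of_ne_neg_one hz hz₁)] at hconj
  linarith

lemma card_sub_one_mul_le_of_pairwise_le_abs_sub {s : Finset ℝ} {d l u : ℝ} (hs : s.Nonempty)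
    (hmem : ∀ x ∈ s, x ∈ Set.Icc l u) (hsep : (s : Set ℝ).Pairwise (fun x y ↦ d ≤ |x - y|)) :
    ((s.card : ℝ) - 1) * d ≤ u - l := by
  induction s using Finset.induction_on_max generalizing u with
  | empty => exact absurd hs Finset.not_nonempty_empty
  | insert a s hlt ih =>
    have ha := hmem a (Finset.mem_insert_self a s)
    rcases s.eq_empty_or_nonempty with rfl | hs'
    · simp only [insert_empty_eq, Finset.card_singleton, Nat.cast_one, sub_self, zero_mul]
      linarith [ha.1, ha.2]
    have hle : ∀ x ∈ s, x ≤ a - d := fun x hx ↦ by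
      have : d ≤ |a - x| :=
        hsep (Finset.mem_insert_self a s) (Finset.mem_insert_of_mem hx) (hlt x hx).ne'
      rw [abs_of_pos (sub_pos.2 (hlt x hx))] at this
      linarith
    have := ih hs' (fun x hx ↦ ⟨(hmem x (Finset.mem_insert_of_mem hx)).1, hle x hx⟩)
      (hsep.mono (by simp))
    rw [Finset.card_insert_of_notMem fun h ↦ (hlt a h).false, Nat.cast_succ]
    linarith [ha.2]

lemma card_sub_one_mul_pi_div_three_le_add_of_norm_eq_one {S : Finset ℂ} {θ θ' : ℝ}
    (hS : S.Nonempty) (hunit : ∀ z ∈ S, ‖z‖ = 1) (hsep : (S : Set ℂ).Pairwise (1 ≤ dist · ·))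
    (hθ : θ ∈ Set.Ioc 0 π) (hθ' : θ' ∈ Set.Ioc 0 π) (hA : ∀ z ∈ S, 1 ≤ dist z (-1))
    (hp : ∀ z ∈ S, 1 ≤ dist z (cexp (θ * I) - 1)) (hm : ∀ z ∈ S, 1 ≤ dist z (cexp (-θ' * I) - 1)) :
    ((S.card : ℝ) - 1) * (π / 3) ≤ θ + θ' := by
  have hinj : Set.InjOn arg S := fun z hz w hw h ↦
    Complex.ext_norm_arg (by rw [hunit z hz, hunit w hw]) h
  have hne : ∀ z ∈ S, z ≠ -1 := fun z hz h ↦ by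
    have := hA z hz
    rw [h, dist_self] at this
    linarith
  have := card_sub_one_mul_le_of_pairwise_le_abs_sub (s := S.image arg) (hS.image arg)
    (l := -θ') (u := θ) (d := π / 3) ?_ ?_
  · rwa [Finset.card_image_of_injOn hinj, sub_neg_eq_add] at this
  · simp only [Finset.mem_image, forall_exists_index, and_imp, forall_apply_eq_imp_iff₂]
    exact fun z hz ↦ ⟨neg_le_arg_of_one_le_dist_exp_neg_mul_I_sub_one (hunit z hz) (hne z hz) hθ'
      (hm z hz), arg_le_of_one_le_dist_exp_mul_I_sub_one (hunit z hz) (hne z hz) hθ (hp z hz)⟩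
  · rw [Finset.coe_image, hinj.pairwise_image]
    exact fun z hz w hw hzw ↦ pi_div_three_le_abs_arg_sub (hunit z hz) (hunit w hw) (hsep hz hw hzw)

section UnitNeighbors

variable {α : Type*} [PseudoMetricSpace α]

open Classical in
noncomputable def unitNeighbors (Q : Finset α) (a : α) : Finset α :=
  Q.filter (dist a · = 1)

@[simp]
lemma mem_unitNeighbors {Q : Finset α} {a q : α} : q ∈ unitNeighbors Q a ↔ q ∈ Q ∧ dist a q = 1 :=
  Finset.mem_filter

end UnitNeighbors

lemma dist_sub_div_sub_div {u : ℂ} (hu : ‖u‖ = 1) (c z w : ℂ) :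
    dist ((z - c) / u) ((w - c) / u) = dist z w := by
  rw [Complex.dist_eq, ← sub_div, norm_div, hu, div_one, sub_sub_sub_cancel_right, Complex.dist_eq]

lemma card_sub_one_mul_pi_div_three_le_add {S : Finset ℂ} {a u : ℂ} {θ θ' : ℝ}
    (hS : S.Nonempty) (hu : ‖u‖ = 1) (hsep : (S : Set ℂ).Pairwise (1 ≤ dist · ·))
    (hθ : θ ∈ Set.Ioc 0 π) (hθ' : θ' ∈ Set.Ioc 0 π) (hB : ∀ z ∈ S, dist z (a + u) = 1)
    (hA : ∀ z ∈ S, 1 ≤ dist z a) (hp : ∀ z ∈ S, 1 ≤ dist z (a + u * cexp (θ * I)))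
    (hm : ∀ z ∈ S, 1 ≤ dist z (a + u * cexp (-θ' * I))) :
    ((S.card : ℝ) - 1) * (π / 3) ≤ θ + θ' := by
  have hu₀ : u ≠ 0 := by rintro rfl; simp at hu
  set φ : ℂ → ℂ := fun z ↦ (z - (a + u)) / u
  have hφ : ∀ z w, dist (φ z) (φ w) = dist z w := dist_sub_div_sub_div hu (a + u)
  have hφ_inj : Function.Injective φ := fun z w h ↦ dist_eq_zero.1 (by rw [← hφ, h, dist_self])
  have hφ₀ : φ (a + u) = 0 := by simp [φ]
  have hφa : φ a = -1 := by simp only [φ]; field_simp; ring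
  have hφp : φ (a + u * cexp (θ * I)) = cexp (θ * I) - 1 := by simp only [φ]; field_simp; ring
  have hφm : φ (a + u * cexp (-θ' * I)) = cexp (-θ' * I) - 1 := by simp only [φ]; field_simp; ring
  have key := card_sub_one_mul_pi_div_three_le_add_of_norm_eq_one (hS.image φ)
    (Finset.forall_mem_image.2 fun z hz ↦ by rw [← dist_zero_right, ← hφ₀, hφ, hB z hz])
    (by
      rw [Finset.coe_image, hφ_inj.injOn.pairwise_image]
      exact fun z hz w hw hzw ↦ (hφ z w).ge.trans' (hsep hz hw hzw))
    hθ hθ' (Finset.forall_mem_image.2 fun z hz ↦ by rw [← hφa, hφ]; exact hA z hz)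
    (Finset.forall_mem_image.2 fun z hz ↦ by rw [← hφp, hφ]; exact hp z hz)
    (Finset.forall_mem_image.2 fun z hz ↦ by rw [← hφm, hφ]; exact hm z hz)
  rwa [Finset.card_image_of_injective S hφ_inj] at key

lemma pi_le_add_of_five_le_card_unitNeighbors {Q : Finset ℂ}
    (hQ : (Q : Set ℂ).Pairwise (1 ≤ dist · ·)) {a u : ℂ} {θ θ' : ℝ} (ha : a ∈ Q) (hu : ‖u‖ = 1)
    (hp : a + u * cexp (θ * I) ∈ Q) (hm : a + u * cexp (-θ' * I) ∈ Q)
    (hθ : θ ∈ Set.Ioc (π / 3) π) (hθ' : θ' ∈ Set.Ioc (π / 3) π)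
    (hdeg : 5 ≤ (unitNeighbors Q (a + u)).card) : π ≤ θ + θ' := by
  set C := (unitNeighbors Q (a + u)).erase a
  have hC : ∀ c ∈ C, c ∈ Q ∧ dist (a + u) c = 1 := fun c hc ↦
    mem_unitNeighbors.1 (Finset.mem_of_mem_erase hc)
  have hfar : ∀ c ∈ C, ∀ q ∈ Q, dist (a + u) q ≠ 1 → 1 ≤ dist c q := fun c hc q hq hq₁ ↦
    hQ (hC c hc).1 hq (by rintro rfl; exact hq₁ (hC c hc).2)
  have hcard : 4 ≤ C.card := by
    rw [Finset.card_erase_of_mem (mem_unitNeighbors.2 ⟨ha, by simpa [Complex.dist_eq] using hu⟩)]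
    omega
  have hp₁ : dist (a + u) (a + u * cexp (θ * I)) ≠ 1 :=
    (one_lt_dist_add_add_mul_exp_mul_I a hu (cos_lt_one_half_of_mem_Ioc hθ)).ne'
  have hm₁ : dist (a + u) (a + u * cexp (-θ' * I)) ≠ 1 := by
    have h := one_lt_dist_add_add_mul_exp_mul_I a hu (θ := -θ')
      (by rw [cos_neg]; exact cos_lt_one_half_of_mem_Ioc hθ')
    rw [Complex.ofReal_neg] at h
    exact h.ne'
  have key := card_sub_one_mul_pi_div_three_le_add (S := C)
    (Finset.card_pos.1 (by omega)) hu (fun c hc d hd hcd ↦ hQ (hC c hc).1 (hC d hd).1 hcd)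
    ⟨by linarith [hθ.1, pi_pos], hθ.2⟩ ⟨by linarith [hθ'.1, pi_pos], hθ'.2⟩
    (fun c hc ↦ by rw [dist_comm, (hC c hc).2])
    (fun c hc ↦ hQ (hC c hc).1 ha (Finset.ne_of_mem_erase hc))
    (fun c hc ↦ hfar c hc _ hp hp₁) (fun c hc ↦ hfar c hc _ hm hm₁)
  have : (4 : ℝ) ≤ C.card := by exact_mod_cast hcard
  nlinarith [pi_pos]

lemma pi_le_add_or_eq_pi_div_three {Q : Finset ℂ} (hQ : (Q : Set ℂ).Pairwise (1 ≤ dist · ·))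
    {a u : ℂ} {θ θ' : ℝ} (ha : a ∈ Q) (hu : ‖u‖ = 1) (hp : a + u * cexp (θ * I) ∈ Q)
    (hm : a + u * cexp (-θ' * I) ∈ Q) (hθ : π / 3 ≤ θ) (hθ' : π / 3 ≤ θ')
    (hdeg : 5 ≤ (unitNeighbors Q (a + u)).card) : π ≤ θ' + θ ∨ θ' = π / 3 ∨ θ = π / 3 := by
  rcases hθ'.eq_or_lt with h' | h'
  · exact Or.inr (Or.inl h'.symm)
  rcases hθ.eq_or_lt with h | h
  · exact Or.inr (Or.inr h.symm)
  by_contra! hlt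
  exact (pi_le_add_of_five_le_card_unitNeighbors hQ ha hu hp hm ⟨h, by linarith⟩ ⟨h', by linarith⟩
    hdeg).not_gt (by linarith)

lemma exists_cyclic_order {n : ℕ} (N : Finset ℂ) (hN : N.card = n + 1) (hunit : ∀ z ∈ N, ‖z‖ = 1) :
    ∃ (b : Fin (n + 1) → ℂ) (g : Fin (n + 1) → ℝ), Function.Injective b ∧ (∀ i, b i ∈ N) ∧
      (∀ i, 0 < g i) ∧ ∑ i, g i = 2 * π ∧ ∀ i, b (i + 1) = b i * cexp (g i * I) := by
  have hinj : Set.InjOn arg N := fun z hz w hw h ↦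
    Complex.ext_norm_arg (by rw [hunit z hz, hunit w hw]) h
  have hT : (N.image arg).card = n + 1 := by rw [Finset.card_image_of_injOn hinj, hN]
  set t := (N.image arg).orderEmbOfFin hT
  have ht : ∀ i, ∃ z ∈ N, arg z = t i := fun i ↦
    Finset.mem_image.1 ((N.image arg).orderEmbOfFin_mem hT i)
  choose b hbN hbt using ht
  have hb : ∀ i, cexp (t i * I) = b i := fun i ↦ by
    rw [← hbt, exp_arg_mul_I_of_norm_eq_one (hunit _ (hbN i))]
  refine ⟨b, fun i ↦ t (i + 1) - t i + if i = Fin.last n then 2 * π else 0,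
    fun i j h ↦ t.injective (by rw [← hbt, ← hbt, h]), hbN, fun i ↦ ?_, ?_, fun i ↦ ?_⟩
  · dsimp only
    split_ifs with hi
    · subst hi
      rw [Fin.last_add_one, ← hbt, ← hbt]
      linarith [Complex.neg_pi_lt_arg (b 0), Complex.arg_le_pi (b (Fin.last n))]
    · have : t i < t (i + 1) :=
        t.strictMono (Fin.lt_add_one_iff.2 ((Fin.le_last i).lt_of_ne hi))
      linarith
  · rw [Finset.sum_add_distrib, Finset.sum_sub_distrib,
      Fintype.sum_equiv (Equiv.addRight 1) (fun i ↦ t (i + 1)) t fun _ ↦ rfl,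
      Finset.sum_ite_eq' Finset.univ, if_pos (Finset.mem_univ _)]
    ring
  · rw [← hb, ← hb, ← Complex.exp_add]
    dsimp only
    split_ifs
    · have := Complex.exp_mul_I_periodic (t (i + 1))
      simp only at this
      rw [← this]
      congr 1
      push_cast
      ring
    · congr 1
      push_cast
      ring

lemma exists_consecutive_eq_pi_div_three (g : Fin 5 → ℝ) (hg : ∀ i, π / 3 ≤ g i)
    (hsum : ∑ i, g i = 2 * π)
    (hpair : ∀ i, π ≤ g i + g (i + 1) ∨ g i = π / 3 ∨ g (i + 1) = π / 3) :
    ∃ i, g i = π / 3 ∧ g (i + 1) = π / 3 := by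
  by_contra! hno
  have hrot : ∀ i, g i + g (i + 1) + g (i + 2) + g (i + 3) + g (i + 4) = 2 * π := fun i ↦ by
    rw [← hsum, ← Equiv.sum_comp (Equiv.addLeft i), Fin.sum_univ_five]
    simp
  by_cases hloose : ∃ i, g i ≠ π / 3 ∧ g (i + 1) ≠ π / 3
  · -- two consecutive gaps `≠ π / 3` take up `π`, leaving exactly `π / 3` for each of the others
    obtain ⟨i, h₀, h₁⟩ := hloose
    have hπ := (hpair i).resolve_right (not_or.2 ⟨h₀, h₁⟩)
    have h₂ : g (i + 2) = π / 3 := by linarith [hrot i, hg (i + 2), hg (i + 3), hg (i + 4)]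
    have h₃ : g (i + 3) = π / 3 := by linarith [hrot i, hg (i + 2), hg (i + 3), hg (i + 4)]
    exact hno (i + 2) h₂ (by rwa [add_assoc])
  · -- otherwise gaps `= π / 3` and gaps `≠ π / 3` alternate around a cycle of odd length
    push Not at hloose
    have halt : ∀ i, g (i + 1) = π / 3 ↔ g i ≠ π / 3 := fun i ↦ ⟨fun h h' ↦ hno i h' h, hloose i⟩
    have h0 : g 1 = π / 3 ↔ g 0 ≠ π / 3 := halt 0
    have h1 : g 2 = π / 3 ↔ g 1 ≠ π / 3 := halt 1
    have h2 : g 3 = π / 3 ↔ g 2 ≠ π / 3 := halt 2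
    have h3 : g 4 = π / 3 ↔ g 3 ≠ π / 3 := halt 3
    have h4 : g 0 = π / 3 ↔ g 4 ≠ π / 3 := halt 4
    tauto

theorem exists_unit_path_in_unitNeighbors {Q : Finset ℂ}
    (hQ : (Q : Set ℂ).Pairwise (1 ≤ dist · ·)) {a : ℂ} (ha : a ∈ Q)
    (hdeg : (unitNeighbors Q a).card = 5)
    (hnb : ∀ b ∈ unitNeighbors Q a, 5 ≤ (unitNeighbors Q b).card) :
    ∃ x ∈ unitNeighbors Q a, ∃ y ∈ unitNeighbors Q a, ∃ z ∈ unitNeighbors Q a,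
      x ≠ z ∧ dist x y = 1 ∧ dist y z = 1 := by
  set N := unitNeighbors Q a
  obtain ⟨b, g, hinj, hbN, hpos, hsum, hrot⟩ := exists_cyclic_order (n := 4) (N.image (· - a))
    (by rw [Finset.card_image_of_injective _ (sub_left_injective), hdeg])
    (Finset.forall_mem_image.2 fun q hq ↦ by
      rw [← Complex.dist_eq, dist_comm, (mem_unitNeighbors.1 hq).2])
  set c : Fin 5 → ℂ := fun i ↦ a + b i
  have hc : ∀ i, c i ∈ N := fun i ↦ by
    obtain ⟨q, hq, hqb⟩ := Finset.mem_image.1 (hbN i)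
    simpa [c, ← hqb] using hq
  have hcQ : ∀ i, c i ∈ Q := fun i ↦ (mem_unitNeighbors.1 (hc i)).1
  have hb : ∀ i, ‖b i‖ = 1 := fun i ↦ by
    simpa [c, Complex.dist_eq] using (mem_unitNeighbors.1 (hc i)).2
  have hcne : ∀ i : Fin 5, c i ≠ c (i + 1) ∧ c i ≠ c (i + 1 + 1) := by
    have : ∀ j : Fin 5, j ≠ j + 1 ∧ j ≠ j + 1 + 1 := by decide
    exact fun i ↦ ⟨fun h ↦ (this i).1 (hinj (add_left_cancel h)),
      fun h ↦ (this i).2 (hinj (add_left_cancel h))⟩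
  have hdist : ∀ i, dist (c i) (c (i + 1)) ^ 2 = 2 - 2 * cos (g i) := fun i ↦ by
    simp only [c, hrot]
    exact dist_add_add_mul_exp_mul_I_sq a (hb i) (g i)
  have hg : ∀ i, π / 3 ≤ g i := fun i ↦ by
    have h₁ : 1 ≤ dist (c i) (c (i + 1)) := hQ (hcQ i) (hcQ (i + 1)) (hcne i).1
    have := pi_div_three_le_abs_of_cos_le_half (x := g i) (by nlinarith [hdist i])
    rwa [abs_of_pos (hpos i)] at this
  have hp : ∀ i, a + b (i + 1) * cexp (g (i + 1) * I) ∈ Q := fun i ↦ by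
    rw [← hrot]
    exact hcQ (i + 1 + 1)
  have hm : ∀ i, a + b (i + 1) * cexp (-g i * I) ∈ Q := fun i ↦ by
    rw [hrot, mul_assoc, ← Complex.exp_add, neg_mul, add_neg_cancel, Complex.exp_zero, mul_one]
    exact hcQ i
  have hpair := fun i ↦ pi_le_add_or_eq_pi_div_three hQ ha (hb (i + 1)) (hp i) (hm i) (hg (i + 1))
    (hg i) (hnb _ (hc (i + 1)))
  obtain ⟨i, hi, hi'⟩ := exists_consecutive_eq_pi_div_three g hg hsum hpair
  have hunit : ∀ j, g j = π / 3 → dist (c j) (c (j + 1)) = 1 := fun j hj ↦ by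
    rw [← pow_eq_one_iff_of_nonneg dist_nonneg two_ne_zero, hdist j, hj, cos_pi_div_three]
    norm_num
  exact ⟨c i, hc i, c (i + 1), hc _, c (i + 1 + 1), hc _, (hcne i).2, hunit i hi, hunit _ hi'⟩

lemma unitNeighbors_image {α β : Type*} [PseudoMetricSpace α] [PseudoMetricSpace β]
    [DecidableEq β] {f : α → β} (hf : Isometry f) (Q : Finset α) (a : α) :
    unitNeighbors (Q.image f) (f a) = (unitNeighbors Q a).image f := by
  ext z
  simp only [mem_unitNeighbors, Finset.mem_image]
  constructor
  · rintro ⟨⟨q, hq, rfl⟩, h⟩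
    exact ⟨q, ⟨hq, by rwa [hf.dist_eq] at h⟩, rfl⟩
  · rintro ⟨q, ⟨hq, h⟩, rfl⟩
    exact ⟨⟨q, hq, rfl⟩, by rwa [hf.dist_eq]⟩

lemma deg_eq_card_unitNeighbors (P : Finset Pt) (A : Pt) : deg P A = (unitNeighbors P A).card := by
  rw [deg, ← Set.ncard_coe_finset]
  congr 1
  ext q
  simp

lemma isKernel_of_mem_unitNeighbors {P : Finset Pt} {A X Y Z : Pt} (hA : A ∈ P) (hdA : deg P A = 5)
    (hnb : ∀ B ∈ P, dist A B = 1 → deg P B = 5) (hX : X ∈ unitNeighbors P A)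
    (hY : Y ∈ unitNeighbors P A) (hZ : Z ∈ unitNeighbors P A) (hXZ : X ≠ Z)
    (hXY : dist X Y = 1) (hYZ : dist Y Z = 1) : IsKernel P A X Y Z := by
  rw [mem_unitNeighbors] at hX hY hZ
  have hne : ∀ {p q : Pt}, dist p q = 1 → p ≠ q := fun h e ↦ by simp [e] at h
  refine ⟨hA, hX.1, hY.1, hZ.1, ?_, hdA, hnb X hX.1 hX.2, hnb Y hY.1 hY.2, hnb Z hZ.1 hZ.2,
    hX.2, hXY, hYZ, by rw [dist_comm, hZ.2], hY.2⟩
  simp [hne hX.2, hne hY.2, hne hZ.2, hne hXY, hne hYZ, hXZ]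

theorem Isometry.exists_unit_path_in_unitNeighbors {α : Type*} [MetricSpace α] {f : α → ℂ}
    (hf : Isometry f) {Q : Finset α} (hQ : (Q : Set α).Pairwise (1 ≤ dist · ·)) {a : α}
    (ha : a ∈ Q) (hdeg : (unitNeighbors Q a).card = 5)
    (hnb : ∀ b ∈ unitNeighbors Q a, 5 ≤ (unitNeighbors Q b).card) :
    ∃ x ∈ unitNeighbors Q a, ∃ y ∈ unitNeighbors Q a, ∃ z ∈ unitNeighbors Q a,
      x ≠ z ∧ dist x y = 1 ∧ dist y z = 1 := by
  have hcard : ∀ b, (unitNeighbors (Q.image f) (f b)).card = (unitNeighbors Q b).card := fun b ↦ by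
    rw [unitNeighbors_image hf, Finset.card_image_of_injective _ hf.injective]
  have hsep : (↑(Q.image f) : Set ℂ).Pairwise (1 ≤ dist · ·) := by
    rw [Finset.coe_image, hf.injective.injOn.pairwise_image]
    exact fun p hp q hq hpq ↦ by simpa [Function.onFun, hf.dist_eq] using hQ hp hq hpq
  obtain ⟨x, hx, y, hy, z, hz, hxz, hxy, hyz⟩ := _root_.exists_unit_path_in_unitNeighbors hsep
    (Finset.mem_image_of_mem f ha) (by rw [hcard, hdeg]) fun b hb ↦ by
      rw [unitNeighbors_image hf] at hb
      obtain ⟨B, hB, rfl⟩ := Finset.mem_image.1 hb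
      exact (hcard B).symm ▸ hnb B hB
  rw [unitNeighbors_image hf] at hx hy hz
  obtain ⟨X, hX, rfl⟩ := Finset.mem_image.1 hx
  obtain ⟨Y, hY, rfl⟩ := Finset.mem_image.1 hy
  obtain ⟨Z, hZ, rfl⟩ := Finset.mem_image.1 hz
  rw [hf.dist_eq] at hxy hyz
  exact ⟨X, hX, Y, hY, Z, hZ, ne_of_apply_ne f hxz, hxy, hyz⟩

/-- A point of degree 5 all of whose unit-neighbors also have degree 5 belongs to a
kernel. -/
theorem degree_five_all_neighbors_degree_five_in_kernel (P : Finset Pt)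
    (hP : PennyGP P) (A : Pt) (hA : A ∈ P) (hdA : deg P A = 5)
    (hnb : ∀ B ∈ P, dist A B = 1 → deg P B = 5) :
    ∃ X ∈ P, ∃ Y ∈ P, ∃ Z ∈ P,
      dist A X = 1 ∧ dist A Y = 1 ∧ dist A Z = 1 ∧
      dist X Y = 1 ∧ dist Y Z = 1 ∧ IsKernel P A X Y Z := by
  obtain ⟨X, hX, Y, hY, Z, hZ, hXZ, hXY, hYZ⟩ :=
    Complex.orthonormalBasisOneI.repr.symm.isometry.exists_unit_path_in_unitNeighbors
      (fun p hp q hq hpq ↦ hP.1 p hp q hq hpq) hA (by rw [← deg_eq_card_unitNeighbors, hdA])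
      fun B hB ↦ (hnb B (mem_unitNeighbors.1 hB).1 (mem_unitNeighbors.1 hB).2 ▸
        deg_eq_card_unitNeighbors P B).le
  exact ⟨X, (mem_unitNeighbors.1 hX).1, Y, (mem_unitNeighbors.1 hY).1, Z,
    (mem_unitNeighbors.1 hZ).1, (mem_unitNeighbors.1 hX).2, (mem_unitNeighbors.1 hY).2,
    (mem_unitNeighbors.1 hZ).2, hXY, hYZ,
    isKernel_of_mem_unitNeighbors hA hdA hnb hX hY hZ hXZ hXY hYZ⟩
end

section
/- Let B₁, B₂, B₃, B₄, C be five points in ℝ², no three of which are collinear, such that dist(B₁,B₂) = dist(B₂,B₃) = dist(B₃,B₄) = 1 and all other pairwise distances among these five points are at least 1. Then C does not belong to the convex hull of {B₁, B₂, B₃, B₄}. -/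
open Real EuclideanGeometry

/-!
Suppose `C` lies in the hull. By Carathéodory's theorem in the plane, `C` lies in a triangle
`Bᵢ Bⱼ Bₖ` with `i < j < k`, so the angles `∠ Bᵢ C Bⱼ`, `∠ Bⱼ C Bₖ` and `∠ Bᵢ C Bₖ` add up to `2π`.
Each unit edge `Bₗ Bₗ₊₁` is the shortest side of the triangle `Bₗ C Bₗ₊₁`, so it subtends an angle
of at most `π / 3` at `C`; by the triangle inequality for angles, `∠ Bᵢ C Bⱼ + ∠ Bⱼ C Bₖ ≤ π`.
Hence `∠ Bᵢ C Bₖ = π`, and `Bᵢ`, `C`, `Bₖ` are collinear.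
-/

section

variable {V P : Type*} [NormedAddCommGroup V] [InnerProductSpace ℝ V] [MetricSpace P]
  [NormedAddTorsor V P]

theorem EuclideanGeometry.angle_le_pi_div_three_of_dist_le_of_dist_le {p q c : P} (hpq : p ≠ q)
    (hp : dist p q ≤ dist p c) (hq : dist p q ≤ dist q c) : ∠ p c q ≤ π / 3 := by
  have hd : 0 < dist p q := dist_pos.2 hpq
  have hcos : 1 / 2 ≤ cos (∠ p c q) := by
    have hlaw := law_cos p c q
    have hpc : 0 < dist p c * dist q c := mul_pos (hd.trans_le hp) (hd.trans_le hq)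
    rw [← mul_le_mul_iff_right₀ hpc]
    nlinarith [sq_nonneg (dist p c - dist q c), mul_le_mul hp hq hd.le (hd.trans_le hp).le]
  by_contra! hlt
  have := cos_lt_cos_of_nonneg_of_le_pi (by positivity) (angle_le_pi p c q) hlt
  rw [cos_pi_div_three] at this
  linarith

end

section

variable {V : Type*} [NormedAddCommGroup V] [InnerProductSpace ℝ V]

theorem EuclideanGeometry.angle_add_angle_add_angle_eq_two_pi_of_mem_convexHull {p q r c : V}
    (hc : c ∈ convexHull ℝ {p, q, r}) (hp : c ≠ p) (hq : c ≠ q) (hr : c ≠ r) :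
    ∠ p c q + ∠ q c r + ∠ p c r = 2 * π := by
  rw [convexHull_insert (Set.insert_nonempty q {r}), convexHull_pair,
    mem_convexJoin] at hc
  obtain ⟨p', hp', d, hd, hcd⟩ := hc
  rw [Set.mem_singleton_iff.1 hp', mem_segment_iff_wbtw] at hcd
  rw [mem_segment_iff_wbtw] at hd
  rcases eq_or_ne c d with rfl | hcd'
  · have hpi : ∠ q c r = π := angle_eq_pi_iff_sbtw.2 ⟨hd, hq, hr⟩
    linarith [angle_add_angle_eq_pi_of_angle_eq_pi p hpi]
  · have hpi : ∠ p c d = π := angle_eq_pi_iff_sbtw.2 ⟨hcd, hp, hcd'⟩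
    linarith [angle_add_angle_eq_pi_of_angle_eq_pi q hpi,
      angle_add_angle_eq_pi_of_angle_eq_pi r hpi, angle_add_of_ne_of_ne hq hr hd,
      angle_comm r c p, angle_comm d c r, angle_comm q c p]

theorem EuclideanGeometry.collinear_of_mem_convexHull_of_angle_add_angle_le_pi {p q r c : V}
    (hc : c ∈ convexHull ℝ {p, q, r}) (hp : c ≠ p) (hq : c ≠ q) (hr : c ≠ r)
    (hle : ∠ p c q + ∠ q c r ≤ π) : Collinear ℝ {p, c, r} := by
  refine collinear_of_angle_eq_pi (le_antisymm (angle_le_pi p c r) ?_)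
  linarith [angle_add_angle_add_angle_eq_two_pi_of_mem_convexHull hc hp hq hr]

end

theorem mem_convexHull_triple_of_mem_convexHull_four {E : Type*} [AddCommGroup E]
    [Module ℝ E] (hE : Module.finrank ℝ E = 2) {a b c d x : E} (hd : [a, b, c, d].Nodup)
    (hx : x ∈ convexHull ℝ {a, b, c, d}) :
    x ∈ convexHull ℝ {b, c, d} ∨ x ∈ convexHull ℝ {a, c, d} ∨ x ∈ convexHull ℝ {a, b, d} ∨
      x ∈ convexHull ℝ {a, b, c} := by
  classical
  have : FiniteDimensional ℝ E := Module.finite_of_finrank_eq_succ hE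
  rw [convexHull_eq_union] at hx
  simp only [Set.mem_iUnion, exists_prop] at hx
  obtain ⟨t, hts, hti, hxt⟩ := hx
  have hcard : t.card ≤ 3 := by
    have hle := hti.card_le_finrank_succ
    have hspan := Submodule.finrank_le (vectorSpan ℝ (Set.range ((↑) : t → E)))
    rw [Fintype.card_coe] at hle
    omega
  have hmiss : a ∉ t ∨ b ∉ t ∨ c ∉ t ∨ d ∉ t := by
    by_contra! hall
    have hsub : [a, b, c, d].toFinset ⊆ t := by simp [Finset.insert_subset_iff, hall]
    have h4 := (Finset.card_le_card hsub).trans hcard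
    rw [List.toFinset_card_of_nodup hd] at h4
    simp at h4
  rcases hmiss with h | h | h | h
  · exact Or.inl (convexHull_mono (fun y hy => by have := hts hy; aesop) hxt)
  · exact Or.inr <| Or.inl (convexHull_mono (fun y hy => by have := hts hy; aesop) hxt)
  · exact Or.inr <| Or.inr <| Or.inl (convexHull_mono (fun y hy => by have := hts hy; aesop) hxt)
  · exact Or.inr <| Or.inr <| Or.inr (convexHull_mono (fun y hy => by have := hts hy; aesop) hxt)

/-- The convex hull of a unit path `B₁ B₂ B₃ B₄` contains no further point: if five
points have no three collinear, all pairwise distances at least 1, and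
`dist B₁ B₂ = dist B₂ B₃ = dist B₃ B₄ = 1`, then `C` is outside the convex hull of
`{B₁, B₂, B₃, B₄}`. -/
theorem convex_hull_of_path_empty (B₁ B₂ B₃ B₄ C : Pt)
    (hne : List.Pairwise (· ≠ ·) [B₁, B₂, B₃, B₄, C])
    (hcol : ∀ p ∈ ({B₁, B₂, B₃, B₄, C} : Set Pt),
      ∀ q ∈ ({B₁, B₂, B₃, B₄, C} : Set Pt),
      ∀ r ∈ ({B₁, B₂, B₃, B₄, C} : Set Pt),
      p ≠ q → p ≠ r → q ≠ r → ¬ Collinear ℝ ({p, q, r} : Set Pt))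
    (h12 : dist B₁ B₂ = 1) (h23 : dist B₂ B₃ = 1) (h34 : dist B₃ B₄ = 1)
    (hge : ∀ p ∈ ({B₁, B₂, B₃, B₄, C} : Set Pt),
      ∀ q ∈ ({B₁, B₂, B₃, B₄, C} : Set Pt), p ≠ q → 1 ≤ dist p q) :
    C ∉ convexHull ℝ ({B₁, B₂, B₃, B₄} : Set Pt) := by
  intro hC
  have hnd : [B₁, B₂, B₃, B₄].Nodup := hne.sublist (by simp)
  simp only [List.pairwise_cons, List.mem_cons, List.not_mem_nil, List.Pairwise.nil,
    forall_eq_or_imp, forall_eq, or_false, and_true] at hne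
  obtain ⟨⟨n12, n13, n14, n1C⟩, ⟨n23, n24, n2C⟩, ⟨n34, n3C⟩, n4C, -⟩ := hne
  have far : ∀ B ∈ ({B₁, B₂, B₃, B₄, C} : Set Pt), B ≠ C → 1 ≤ dist B C :=
    fun B hB hBC => hge B hB C (by simp) hBC
  have t12 : ∠ B₁ C B₂ ≤ π / 3 := angle_le_pi_div_three_of_dist_le_of_dist_le n12
    (h12 ▸ far B₁ (by simp) n1C) (h12 ▸ far B₂ (by simp) n2C)
  have t23 : ∠ B₂ C B₃ ≤ π / 3 := angle_le_pi_div_three_of_dist_le_of_dist_le n23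
    (h23 ▸ far B₂ (by simp) n2C) (h23 ▸ far B₃ (by simp) n3C)
  have t34 : ∠ B₃ C B₄ ≤ π / 3 := angle_le_pi_div_three_of_dist_le_of_dist_le n34
    (h34 ▸ far B₃ (by simp) n3C) (h34 ▸ far B₄ (by simp) n4C)
  rcases mem_convexHull_triple_of_mem_convexHull_four finrank_euclideanSpace_fin hnd hC
    with h | h | h | h
  · exact hcol B₂ (by simp) C (by simp) B₄ (by simp) n2C n24 n4C.symm
      (collinear_of_mem_convexHull_of_angle_add_angle_le_pi h n2C.symm n3C.symm n4C.symm
        (by linarith [pi_pos]))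
  · exact hcol B₁ (by simp) C (by simp) B₄ (by simp) n1C n14 n4C.symm
      (collinear_of_mem_convexHull_of_angle_add_angle_le_pi h n1C.symm n3C.symm n4C.symm
        (by linarith [angle_le_angle_add_angle C B₁ B₂ B₃]))
  · exact hcol B₁ (by simp) C (by simp) B₄ (by simp) n1C n14 n4C.symm
      (collinear_of_mem_convexHull_of_angle_add_angle_le_pi h n1C.symm n2C.symm n4C.symm
        (by linarith [angle_le_angle_add_angle C B₂ B₃ B₄]))
  · exact hcol B₁ (by simp) C (by simp) B₃ (by simp) n1C n13 n3C.symm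
      (collinear_of_mem_convexHull_of_angle_add_angle_le_pi h n1C.symm n2C.symm n3C.symm
        (by linarith [pi_pos]))
end

section
/- For all real numbers x, y with π/3 ≤ x ≤ 2π/3 and π/3 ≤ y ≤ 2π/3, one has 3 − 2·sin(x + π/6) − 2·sin(y + π/6) − 2·cos(x + y + π/3) ≤ 1, with equality if and only if x = π/3 or y = π/3. -/
open Real

/-- For `π/3 ≤ x, y ≤ 2π/3` one has
`3 − 2·sin(x + π/6) − 2·sin(y + π/6) − 2·cos(x + y + π/3) ≤ 1`,
with equality if and only if `x = π/3` or `y = π/3`. -/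
theorem key_inequality (x y : ℝ)
    (hx₁ : π / 3 ≤ x) (hx₂ : x ≤ 2 * π / 3)
    (hy₁ : π / 3 ≤ y) (hy₂ : y ≤ 2 * π / 3) :
    3 - 2 * sin (x + π / 6) - 2 * sin (y + π / 6) - 2 * cos (x + y + π / 3) ≤ 1 ∧
    (3 - 2 * sin (x + π / 6) - 2 * sin (y + π / 6) - 2 * cos (x + y + π / 3) = 1 ↔
      x = π / 3 ∨ y = π / 3) := by
  have hπ := Real.pi_pos
  set A := (x - π / 3) / 2 with hA
  set B := (y - π / 3) / 2 with hB
  have hA0 : 0 ≤ A := by rw [hA]; linarith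
  have hA1 : A ≤ π / 6 := by rw [hA]; linarith
  have hB0 : 0 ≤ B := by rw [hB]; linarith
  have hB1 : B ≤ π / 6 := by rw [hB]; linarith
  have hid : 3 - 2 * sin (x + π / 6) - 2 * sin (y + π / 6) - 2 * cos (x + y + π / 3)
      = 1 - 8 * sin A * sin B * cos (A + B) := by
    have hx : x = 2 * A + π / 3 := by rw [hA]; ring
    have hy : y = 2 * B + π / 3 := by rw [hB]; ring
    rw [hx, hy]
    have e1 : 2 * A + π / 3 + π / 6 = A + A + π / 2 := by ring
    have e2 : 2 * B + π / 3 + π / 6 = B + B + π / 2 := by ring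
    have e3 : 2 * A + π / 3 + (2 * B + π / 3) + π / 3 = (A + A + (B + B)) + π := by ring
    rw [e1, e2, e3, Real.sin_add_pi_div_two, Real.sin_add_pi_div_two, Real.cos_add_pi]
    simp only [Real.cos_add, Real.sin_add]
    have pA := Real.sin_sq_add_cos_sq A
    have pB := Real.sin_sq_add_cos_sq B
    linear_combination (2 * cos B ^ 2 - 2 * sin B ^ 2 - 2) * pA - 4 * sin A ^ 2 * pB
  have hsA : 0 ≤ sin A := Real.sin_nonneg_of_nonneg_of_le_pi hA0 (by linarith)
  have hsB : 0 ≤ sin B := Real.sin_nonneg_of_nonneg_of_le_pi hB0 (by linarith)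
  have hcAB : 0 < cos (A + B) := Real.cos_pos_of_mem_Ioo ⟨by linarith, by linarith⟩
  have hprod : 0 ≤ 8 * sin A * sin B * cos (A + B) := by positivity
  refine ⟨by rw [hid]; linarith, ?_⟩
  rw [hid]
  constructor
  · intro h
    have h0 : sin A * sin B = 0 := by
      have : 8 * sin A * sin B * cos (A + B) = 0 := by linarith
      have h8 : sin A * sin B * cos (A + B) = 0 := by linarith
      rcases mul_eq_zero.1 h8 with h' | h'
      · exact h'
      · exact absurd h' (ne_of_gt hcAB)
    rcases mul_eq_zero.1 h0 with h' | h'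
    · left
      have hAz : A = 0 := by
        by_contra hAn
        have : 0 < sin A := Real.sin_pos_of_pos_of_lt_pi (lt_of_le_of_ne hA0 (Ne.symm hAn)) (by linarith)
        linarith
      rw [hA] at hAz; linarith
    · right
      have hBz : B = 0 := by
        by_contra hBn
        have : 0 < sin B := Real.sin_pos_of_pos_of_lt_pi (lt_of_le_of_ne hB0 (Ne.symm hBn)) (by linarith)
        linarith
      rw [hB] at hBz; linarith
  · rintro (h | h)
    · have : A = 0 := by rw [hA, h]; ring
      rw [this]; simp
    · have : B = 0 := by rw [hB, h]; ring
      rw [this]; simp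
end
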